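/- arXiv:2308.12094 — 12 statements merged into one kernel-verified Lean document; each statement's English description precedes it below -/
import Mathlib

section
/- Let X, ℓ, n be positive integers with X > 1, ℓ > 1, ℓ odd, and let p be an odd prime. If (X^ℓ - 1)/(X - 1) = p^n, then ℓ is an odd prime and p ≡ 1 (mod 2ℓ). -/
/-!
Write `S_d = ∑_{i<d} X^i`. For every divisor `d > 1` of `ℓ`, `S_d` is a divisor `> 1` of `p^n`, so
`p ∣ S_d` and `X^d ≡ 1 (mod p)`. By lifting the exponent, `X ≡ 1 (mod p)` would give
`v_p(S_ℓ) = v_p(ℓ)`, i.e. `p^n ∣ ℓ < S_ℓ`; so `X ≢ 1`, and by Fermat `p ∤ ℓ`. If `q` is the least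
prime factor of `ℓ = q m`, then `S_ℓ = S_q · ∑_{j<m} X^{qj}` and the second factor is `≡ m (mod p)`,
so `m > 1` would give `p ∣ m ∣ ℓ`. Hence `ℓ = q` is prime, `X` has order `ℓ` modulo `p`, and
`ℓ ∣ p - 1`; as `ℓ` is odd and `p - 1` even, `2ℓ ∣ p - 1`.
-/

open Finset

theorem geom_sum_pow_mul_geom_sum {R : Type*} [Semiring R] (x : R) (d m : ℕ) :
    (∑ j ∈ range m, (x ^ d) ^ j) * ∑ i ∈ range d, x ^ i = ∑ i ∈ range (d * m), x ^ i := by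
  induction m with
  | zero => simp
  | succ m ih =>
    rw [sum_range_succ, add_mul, ih, Nat.mul_succ, sum_range_add, mul_sum]
    simp only [← pow_mul, ← pow_add]

theorem geom_sum_dvd_geom_sum_of_dvd {R : Type*} [CommSemiring R] (x : R) {d ℓ : ℕ}
    (h : d ∣ ℓ) : ∑ i ∈ range d, x ^ i ∣ ∑ i ∈ range ℓ, x ^ i := by
  obtain ⟨m, rfl⟩ := h
  exact Dvd.intro_left _ (geom_sum_pow_mul_geom_sum x d m)

theorem pow_eq_one_of_geom_sum_eq_zero {R : Type*} [Ring R] {x : R} {d : ℕ}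
    (h : ∑ i ∈ range d, x ^ i = 0) : x ^ d = 1 := by
  rw [← sub_eq_zero, ← geom_sum_mul, h, zero_mul]

theorem Nat.lt_geom_sum {x d : ℕ} (hx : 1 < x) (hd : 2 ≤ d) : d < ∑ i ∈ range d, x ^ i :=
  calc d = ∑ _i ∈ range d, 1 := by simp
    _ < ∑ i ∈ range d, x ^ i :=
      sum_lt_sum (fun i _ ↦ Nat.one_le_pow _ _ (by omega)) ⟨1, mem_range.2 hd, by simpa⟩

theorem Nat.Prime.dvd_of_one_lt_of_dvd_pow {p a n : ℕ} (hp : p.Prime) (ha : 1 < a)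
    (h : a ∣ p ^ n) : p ∣ a := by
  obtain ⟨m, -, rfl⟩ := (Nat.dvd_prime_pow hp).1 h
  exact dvd_pow_self p (by rintro rfl; simp at ha)

theorem Nat.Prime.dvd_of_geom_sum_dvd_pow {p x m n : ℕ} (hp : p.Prime) (hx1 : 1 < x)
    (hx : (x : ZMod p) = 1) (hm : 2 ≤ m) (h : ∑ i ∈ range m, x ^ i ∣ p ^ n) : p ∣ m := by
  have hsum : p ∣ ∑ i ∈ range m, x ^ i :=
    hp.dvd_of_one_lt_of_dvd_pow (by linarith [Nat.lt_geom_sum hx1 hm]) h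
  rw [← ZMod.natCast_eq_zero_iff] at hsum ⊢
  simpa [hx] using hsum

section GeomSumEqPrimePow

variable {X ℓ n p : ℕ}

theorem natCast_pow_eq_one_of_geom_sum_eq_prime_pow (hX : 1 < X) (hp : p.Prime)
    (h : ∑ i ∈ range ℓ, X ^ i = p ^ n) {d : ℕ} (hd : d ∣ ℓ) (hd2 : 2 ≤ d) :
    (X : ZMod p) ^ d = 1 := by
  have hpd := hp.dvd_of_one_lt_of_dvd_pow (by linarith [Nat.lt_geom_sum hX hd2])
    (h ▸ geom_sum_dvd_geom_sum_of_dvd X hd)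
  exact pow_eq_one_of_geom_sum_eq_zero (by exact_mod_cast (ZMod.natCast_eq_zero_iff _ _).2 hpd)

theorem natCast_ne_one_of_geom_sum_eq_prime_pow (hX : 1 < X) (hℓ : 1 < ℓ) (hp : p.Prime)
    (hpodd : Odd p) (h : ∑ i ∈ range ℓ, X ^ i = p ^ n) : (X : ZMod p) ≠ 1 := by
  have := Fact.mk hp
  intro hX1
  have hpX : p ∣ X - 1 := (ZMod.natCast_eq_zero_iff _ _).1 (by simp [Nat.cast_sub hX.le, hX1])
  have hpX' : ¬ p ∣ X := fun hpX' ↦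
    hp.one_lt.ne' (Nat.dvd_one.1 (by simpa [Nat.sub_sub_self hX.le] using Nat.dvd_sub hpX' hpX))
  have lte := padicValNat.pow_sub_pow hpodd hX hpX hpX' (n := ℓ) (by omega)
  rw [one_pow, ← geom_sum_mul_of_one_le hX.le, h, padicValNat.mul (pow_ne_zero _ hp.ne_zero)
    (by omega), padicValNat.prime_pow, add_comm, Nat.add_left_cancel_iff] at lte
  have : p ^ n ≤ ℓ := Nat.le_of_dvd (by omega) (lte ▸ pow_padicValNat_dvd)
  linarith [Nat.lt_geom_sum hX hℓ]

theorem not_dvd_of_geom_sum_eq_prime_pow (hX : 1 < X) (hℓ : 1 < ℓ) (hp : p.Prime)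
    (hpodd : Odd p) (h : ∑ i ∈ range ℓ, X ^ i = p ^ n) : ¬ p ∣ ℓ := by
  have := Fact.mk hp
  intro hpℓ
  apply natCast_ne_one_of_geom_sum_eq_prime_pow hX hℓ hp hpodd h
  simpa [ZMod.pow_card] using natCast_pow_eq_one_of_geom_sum_eq_prime_pow hX hp h hpℓ hp.two_le

theorem prime_of_geom_sum_eq_prime_pow (hX : 1 < X) (hℓ : 1 < ℓ) (hp : p.Prime)
    (hpodd : Odd p) (h : ∑ i ∈ range ℓ, X ^ i = p ^ n) : ℓ.Prime := by
  set q := ℓ.minFac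
  have hq : q.Prime := Nat.minFac_prime (by omega)
  obtain ⟨m, hm⟩ : q ∣ ℓ := ℓ.minFac_dvd
  have hXq : ((X ^ q : ℕ) : ZMod p) = 1 := by
    push_cast
    exact natCast_pow_eq_one_of_geom_sum_eq_prime_pow hX hp h ⟨m, hm⟩ hq.two_le
  by_contra hℓq
  have hm2 : 2 ≤ m := by
    rcases m with _ | _ | m
    · omega
    · exact absurd (by rwa [hm, zero_add, mul_one]) hℓq
    · omega
  have hcofactor : ∑ j ∈ range m, (X ^ q) ^ j ∣ p ^ n := by
    rw [← h, hm, ← geom_sum_pow_mul_geom_sum]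
    exact dvd_mul_right _ _
  exact not_dvd_of_geom_sum_eq_prime_pow hX hℓ hp hpodd h
    ((hp.dvd_of_geom_sum_dvd_pow (Nat.one_lt_pow hq.ne_zero hX) hXq hm2 hcofactor).trans
      (Dvd.intro_left _ hm.symm))

end GeomSumEqPrimePow

theorem stmt_4_general (X ℓ n p : ℕ) (hX : 1 < X) (hℓ : 1 < ℓ) (hℓodd : Odd ℓ)
    (hp : p.Prime) (hpodd : Odd p)
    (h : ∑ i ∈ Finset.range ℓ, X ^ i = p ^ n) :
    ℓ.Prime ∧ p ≡ 1 [MOD 2 * ℓ] := by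
  have := Fact.mk hp
  have hℓprime := prime_of_geom_sum_eq_prime_pow hX hℓ hp hpodd h
  have := Fact.mk hℓprime
  have hxℓ : (X : ZMod p) ^ ℓ = 1 :=
    natCast_pow_eq_one_of_geom_sum_eq_prime_pow hX hp h dvd_rfl hℓ
  have hx0 : (X : ZMod p) ≠ 0 := by
    rintro h0
    simp [h0, zero_pow (by omega : ℓ ≠ 0)] at hxℓ
  have hℓp : ℓ ∣ p - 1 :=
    orderOf_eq_prime hxℓ (natCast_ne_one_of_geom_sum_eq_prime_pow hX hℓ hp hpodd h) ▸
      ZMod.orderOf_dvd_card_sub_one hx0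
  refine ⟨hℓprime, ((Nat.modEq_iff_dvd' hp.one_lt.le).2 ?_).symm⟩
  exact Nat.Coprime.mul_dvd_of_dvd_of_dvd (Nat.coprime_two_left.2 hℓodd)
    (Nat.Odd.sub_odd hpodd odd_one).two_dvd hℓp

theorem stmt_4 (X ℓ n p : ℕ) (hX : 1 < X) (hℓ : 1 < ℓ) (hℓodd : Odd ℓ)
    (hn : 0 < n) (hp : p.Prime) (hpodd : Odd p)
    (h : ∑ i ∈ Finset.range ℓ, X ^ i = p ^ n) :
    ℓ.Prime ∧ p ≡ 1 [MOD 2 * ℓ] :=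
  stmt_4_general X ℓ n p hX hℓ hℓodd hp hpodd h
end

section
/- Let X, ℓ, m, n be positive integers with X > 1, ℓ > 1, and let p be an odd prime. If X^ℓ - 1 = 2^m · p^n and ℓ is odd, then ℓ is an odd prime, X - 1 = 2^m, (X^ℓ - 1)/(X - 1) = p^n, and p ≡ 1 (mod 2ℓ). -/
/-!
As `X ^ ℓ - 1` is even, `X` is odd, so `S = 1 + X + ⋯ + X ^ (ℓ - 1)` is odd and, dividing
`2 ^ m * p ^ n`, is a power of `p`. If `p` divided `X - 1`, lifting the exponent would give
`v_p(S) = v_p(ℓ)`, hence `S ∣ ℓ`, which is absurd since `S > ℓ`. So `p ∤ X - 1`, and comparing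
`(X - 1) * S = 2 ^ m * p ^ n` gives `X - 1 = 2 ^ m` and `S = p ^ n`. For a factorisation
`ℓ = d * r` with `d, r > 1`, the same argument applied to `X ^ d` (where `p ∣ X ^ d - 1`)
shows that `ℓ` is prime. Finally `X` has order `ℓ` modulo `p`, so `ℓ ∣ p - 1`.
-/

open Finset

namespace Nat

lemma sub_one_mul_geom_sum {y : ℕ} (hy : 1 ≤ y) (r : ℕ) :
    (y - 1) * ∑ i ∈ range r, y ^ i = y ^ r - 1 := by
  have h := geom_sum_mul_add (y - 1) r
  rw [Nat.sub_add_cancel hy, mul_comm] at h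
  exact Nat.eq_sub_of_add_eq h

lemma odd_geom_sum {y r : ℕ} (hy : Odd y) (hr : Odd r) : Odd (∑ i ∈ range r, y ^ i) := by
  simpa [odd_sum_iff_odd_card_odd, hy.pow] using hr

lemma lt_geom_sum_s5 {y r : ℕ} (hy : 1 < y) (hr : 1 < r) : r < ∑ i ∈ range r, y ^ i :=
  calc r = ∑ _i ∈ range r, 1 := by simp
    _ < ∑ i ∈ range r, y ^ i :=
      sum_lt_sum (fun i _ => Nat.one_le_pow _ _ (by omega)) ⟨1, mem_range.2 hr, by simpa⟩

lemma eq_and_eq_of_mul_prime_pow_eq {p a b k n : ℕ} (hp : p.Prime) (ha : ¬p ∣ a) (hb : ¬p ∣ b)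
    (h : a * p ^ k = b * p ^ n) : a = b ∧ k = n := by
  have := Fact.mk hp
  have hk : k = n := by
    have hv := congrArg (padicValNat p) h
    rwa [padicValNat.mul (by rintro rfl; simp at ha) (pow_pos hp.pos k).ne',
      padicValNat.mul (by rintro rfl; simp at hb) (pow_pos hp.pos n).ne',
      padicValNat.eq_zero_of_not_dvd ha, padicValNat.eq_zero_of_not_dvd hb,
      padicValNat.prime_pow, padicValNat.prime_pow, zero_add, zero_add] at hv
  subst hk
  exact ⟨Nat.eq_of_mul_eq_mul_right (pow_pos hp.pos k) h, rfl⟩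

end Nat

open Nat

section
variable {p m n y r X ℓ : ℕ}

lemma geom_sum_eq_prime_pow (hp : p.Prime) (hy : Odd y) (hr : Odd r)
    (h : y ^ r - 1 ∣ 2 ^ m * p ^ n) : ∃ k, ∑ i ∈ range r, y ^ i = p ^ k := by
  have hS : ∑ i ∈ range r, y ^ i ∣ 2 ^ m * p ^ n :=
    (Dvd.intro_left _ (sub_one_mul_geom_sum hy.pos r)).trans h
  obtain ⟨k, -, hk⟩ := (Nat.dvd_prime_pow hp).1 <|
    ((odd_geom_sum hy hr).coprime_two_right.pow_right m).dvd_of_dvd_mul_left hS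
  exact ⟨k, hk⟩

lemma prime_dvd_pow_sub_one (hp : p.Prime) (hy : 1 < y) (hyodd : Odd y) (hr : 1 < r)
    (hrodd : Odd r) (h : y ^ r - 1 ∣ 2 ^ m * p ^ n) : p ∣ y ^ r - 1 := by
  obtain ⟨k, hk⟩ := geom_sum_eq_prime_pow hp hyodd hrodd h
  have hk0 : k ≠ 0 := by
    rintro rfl
    have := lt_geom_sum_s5 hy hr
    rw [hk, pow_zero] at this
    omega
  exact (hk ▸ dvd_pow_self p hk0).trans (Dvd.intro_left _ (sub_one_mul_geom_sum hy.le r))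

lemma not_prime_dvd_sub_one (hp : p.Prime) (hpodd : Odd p) (hy : 1 < y) (hyodd : Odd y)
    (hr : 1 < r) (hrodd : Odd r) (h : y ^ r - 1 ∣ 2 ^ m * p ^ n) : ¬p ∣ y - 1 := by
  intro hpy
  have := Fact.mk hp
  obtain ⟨k, hk⟩ := geom_sum_eq_prime_pow hp hyodd hrodd h
  have hpy' : ¬p ∣ y := fun hpy' => hp.not_dvd_one <| by
    simpa [Nat.sub_sub_self hy.le] using Nat.dvd_sub hpy' hpy
  have hlte := padicValNat.pow_sub_pow hpodd hy (by simpa using hpy) hpy' (n := r) (by omega)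
  rw [one_pow, ← sub_one_mul_geom_sum hy.le,
    padicValNat.mul (by omega) (odd_geom_sum hyodd hrodd).pos.ne', hk, padicValNat.prime_pow,
    Nat.add_left_cancel_iff] at hlte
  have hdvd : ∑ i ∈ range r, y ^ i ∣ r := hk ▸ hlte ▸ pow_padicValNat_dvd
  exact (Nat.le_of_dvd (by omega) hdvd).not_gt (lt_geom_sum_s5 hy hr)

lemma prime_of_pow_sub_one_dvd (hp : p.Prime) (hpodd : Odd p) (hX : 1 < X) (hXodd : Odd X)
    (hℓ : 1 < ℓ) (hℓodd : Odd ℓ) (h : X ^ ℓ - 1 ∣ 2 ^ m * p ^ n) : ℓ.Prime := by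
  by_contra hℓp
  obtain ⟨d, ⟨r, rfl⟩, hd, hdℓ⟩ := Nat.exists_dvd_of_not_prime2 hℓ hℓp
  have hr : 1 < r := (Nat.lt_mul_iff_one_lt_right (by omega)).1 hdℓ
  obtain ⟨hdodd, hrodd⟩ := Nat.odd_mul.1 hℓodd
  have hXd : X ^ d - 1 ∣ 2 ^ m * p ^ n :=
    (Nat.pow_sub_one_dvd_pow_sub_one X (dvd_mul_right d r)).trans h
  refine not_prime_dvd_sub_one (m := m) (n := n) hp hpodd (Nat.one_lt_pow (by omega : d ≠ 0) hX)
    hXodd.pow hr hrodd (by rwa [← pow_mul]) ?_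
  exact prime_dvd_pow_sub_one hp hX hXodd hd hdodd hXd

lemma modEq_one_of_dvd_pow_sub_one (hp : p.Prime) (hpodd : Odd p) (hℓ : ℓ.Prime) (hℓodd : Odd ℓ)
    (hpow : p ∣ X ^ ℓ - 1) (hX : ¬p ∣ X - 1) : p ≡ 1 [MOD 2 * ℓ] := by
  have := Fact.mk hp
  have := Fact.mk hℓ
  have hX0 : X ≠ 0 := by rintro rfl; exact hX (by simp)
  have hpowZ : (X : ZMod p) ^ ℓ = 1 := by
    rw [← Nat.cast_pow, ← Nat.cast_one, ZMod.natCast_eq_natCast_iff]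
    exact ((Nat.modEq_iff_dvd' (Nat.one_le_pow _ _ (by omega))).2 hpow).symm
  have hXZ : (X : ZMod p) ≠ 1 := by
    rw [← Nat.cast_one, Ne, ZMod.natCast_eq_natCast_iff]
    exact fun hX1 => hX ((Nat.modEq_iff_dvd' (by omega)).1 hX1.symm)
  have hXZ0 : (X : ZMod p) ≠ 0 := by
    rintro h0
    simp [h0, hℓ.ne_zero] at hpowZ
  have hℓp : ℓ ∣ p - 1 := orderOf_eq_prime hpowZ hXZ ▸ ZMod.orderOf_dvd_card_sub_one hXZ0
  have h2p : 2 ∣ p - 1 := (Nat.Odd.sub_odd hpodd odd_one).two_dvd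
  exact ((Nat.modEq_iff_dvd' hp.one_le).2 <|
    (Nat.coprime_two_left.2 hℓodd).mul_dvd_of_dvd_of_dvd h2p hℓp).symm

end

theorem stmt_5_general (X ℓ m n p : ℕ) (hX : 1 < X) (hℓ : 1 < ℓ) (hℓodd : Odd ℓ)
    (hm : 0 < m) (hp : p.Prime) (hpodd : Odd p)
    (h : X ^ ℓ - 1 = 2 ^ m * p ^ n) :
    ℓ.Prime ∧ X - 1 = 2 ^ m ∧ (∑ i ∈ Finset.range ℓ, X ^ i) = p ^ n ∧
      p ≡ 1 [MOD 2 * ℓ] := by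
  have hXodd : Odd X := by
    have hXℓ : X ^ ℓ = 2 ^ m * p ^ n + 1 := by
      have := Nat.one_le_pow ℓ X (by omega)
      omega
    have : Odd (X ^ ℓ) := hXℓ ▸ ((Nat.even_pow.2 ⟨even_two, hm.ne'⟩).mul_right _).add_one
    exact (Nat.odd_pow_iff (by omega)).1 this
  have hdvd : X ^ ℓ - 1 ∣ 2 ^ m * p ^ n := h ▸ dvd_rfl
  have hℓprime := prime_of_pow_sub_one_dvd hp hpodd hX hXodd hℓ hℓodd hdvd
  have hpX := not_prime_dvd_sub_one hp hpodd hX hXodd hℓ hℓodd hdvd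
  obtain ⟨k, hk⟩ := geom_sum_eq_prime_pow hp hXodd hℓodd hdvd
  have h2m : ¬p ∣ 2 ^ m := (hp.coprime_iff_not_dvd).1 (hpodd.coprime_two_right.pow_right m)
  have hfac : (X - 1) * p ^ k = 2 ^ m * p ^ n := by
    rw [← hk, sub_one_mul_geom_sum hX.le, h]
  obtain ⟨hX1, rfl⟩ := eq_and_eq_of_mul_prime_pow_eq hp hpX h2m hfac
  exact ⟨hℓprime, hX1, hk, modEq_one_of_dvd_pow_sub_one hp hpodd hℓprime hℓodd
    (prime_dvd_pow_sub_one hp hX hXodd hℓ hℓodd hdvd) hpX⟩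

theorem stmt_5 (X ℓ m n p : ℕ) (hX : 1 < X) (hℓ : 1 < ℓ) (hℓodd : Odd ℓ)
    (hm : 0 < m) (hn : 0 < n) (hp : p.Prime) (hpodd : Odd p)
    (h : X ^ ℓ - 1 = 2 ^ m * p ^ n) :
    ℓ.Prime ∧ X - 1 = 2 ^ m ∧ (∑ i ∈ Finset.range ℓ, X ^ i) = p ^ n ∧
      p ≡ 1 [MOD 2 * ℓ] :=
  stmt_5_general X ℓ m n p hX hℓ hℓodd hm hp hpodd h
end

section
/- Let X, ℓ, m, n be positive integers with X > 1, ℓ > 1, and let p be an odd prime. If X^ℓ - 1 = 2^m · p^n, ℓ is even, and 3 ≤ m ≤ 5, then (p, X, ℓ, m, n) is one of (3,5,2,3,1), (3,7,2,4,1), (5,9,2,4,1), (5,3,4,4,1), (3,17,2,5,2), (7,15,2,5,1). -/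
set_option maxHeartbeats 1000000

lemma pp_aux (p n q e : ℕ) (hp : p.Prime) (hq : Nat.Prime q) (hn : 0 < n)
    (h : p ^ n = q ^ e) : p = q ∧ n = e := by
  have hpd : p ∣ q ^ e := h ▸ dvd_pow_self p hn.ne'
  have hpq : p = q := (Nat.prime_dvd_prime_iff_eq hp hq).mp (hp.dvd_of_dvd_pow hpd)
  subst hpq
  exact ⟨rfl, Nat.pow_right_injective hp.two_le h⟩

theorem stmt_7 (X ℓ m n p : ℕ) (hX : 1 < X) (hℓ : 1 < ℓ) (hℓeven : Even ℓ)
    (hm : 3 ≤ m) (hm5 : m ≤ 5) (hn : 0 < n) (hp : p.Prime) (hpodd : Odd p)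
    (h : X ^ ℓ - 1 = 2 ^ m * p ^ n) :
    (p, X, ℓ, m, n) = (3, 5, 2, 3, 1) ∨ (p, X, ℓ, m, n) = (3, 7, 2, 4, 1) ∨
    (p, X, ℓ, m, n) = (5, 9, 2, 4, 1) ∨ (p, X, ℓ, m, n) = (5, 3, 4, 4, 1) ∨
    (p, X, ℓ, m, n) = (3, 17, 2, 5, 2) ∨ (p, X, ℓ, m, n) = (7, 15, 2, 5, 1) := by
  have hp3 : 3 ≤ p := by
    have h2 := hp.two_le
    rcases hpodd with ⟨r, hr⟩; omega
  obtain ⟨k, hk⟩ := hℓeven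
  have hk1 : 1 ≤ k := by omega
  obtain ⟨Y, hXk⟩ : ∃ Y, X ^ k = Y := ⟨_, rfl⟩
  have hYY : Y * Y = 2 ^ m * p ^ n + 1 := by
    have h1 : 1 ≤ X ^ ℓ := Nat.one_le_pow _ _ (by omega)
    have h2 : X ^ ℓ = Y * Y := by rw [hk, pow_add, hXk]
    omega
  have hpn3 : 3 ≤ p ^ n := le_trans hp3 (Nat.le_self_pow hn.ne' p)
  have hpnodd : p ^ n % 2 = 1 := by
    rcases hpodd.pow (n := n) with ⟨r, hr⟩; omega
  have h8 : 8 ≤ 2 ^ m := by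
    calc (8:ℕ) = 2 ^ 3 := by norm_num
    _ ≤ 2 ^ m := Nat.pow_le_pow_right (by norm_num) hm
  have hmul : 24 ≤ 2 ^ m * p ^ n := by
    calc (24:ℕ) = 8 * 3 := by norm_num
    _ ≤ 2 ^ m * p ^ n := Nat.mul_le_mul h8 hpn3
  have hYodd : Y % 2 = 1 := by
    rcases Nat.even_or_odd Y with he | ho
    · exfalso
      obtain ⟨r, hr⟩ := he
      have h2 : 2 ^ m * p ^ n % 2 = 0 := by
        have : 2 ∣ 2 ^ m * p ^ n :=
          dvd_mul_of_dvd_left (dvd_pow_self 2 (by omega : m ≠ 0)) _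
        omega
      have hrr : Y * Y = 2 * (r * Y) := by rw [hr]; ring
      omega
    · rcases ho with ⟨r, hr⟩; omega
  have hY3 : 3 ≤ Y := by
    rcases Nat.lt_or_ge Y 3 with hlt | hge
    · exfalso
      have : Y * Y ≤ 2 * 2 := Nat.mul_le_mul (by omega) (by omega)
      omega
    · exact hge
  have hfac : (Y - 1) * (Y + 1) = 2 ^ m * p ^ n := by
    have key : (Y - 1) * (Y + 1) + 1 = Y * Y := by
      rcases Nat.exists_eq_add_of_le hY3 with ⟨Z, hZ⟩
      subst hZ
      have h1 : 3 + Z - 1 = Z + 2 := by omega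
      rw [h1]; ring
    omega
  have hpdvd : p ∣ (Y - 1) * (Y + 1) := by
    rw [hfac]; exact Dvd.dvd.mul_left (dvd_pow_self p hn.ne') _
  have h2m32 : (2:ℕ) ^ m ∣ 32 := by
    calc (2:ℕ) ^ m ∣ 2 ^ 5 := pow_dvd_pow 2 hm5
    _ = 32 := by norm_num
  have hd : (Y - 1) ∣ 32 ∨ (Y + 1) ∣ 32 := by
    rcases (Nat.Prime.dvd_mul hp).mp hpdvd with h1 | h1
    · right
      have hnd : ¬ p ∣ (Y + 1) := by
        intro h2
        have h3 : p ∣ 2 := by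
          have h4 := Nat.dvd_sub h2 h1
          have he : Y + 1 - (Y - 1) = 2 := by omega
          rwa [he] at h4
        have := Nat.le_of_dvd (by norm_num) h3; omega
      have hcop : Nat.Coprime (Y + 1) (p ^ n) :=
        Nat.Coprime.pow_right _ (hp.coprime_iff_not_dvd.mpr hnd).symm
      have hdvd : (Y + 1) ∣ 2 ^ m * p ^ n := by rw [← hfac]; exact dvd_mul_left _ _
      exact (hcop.dvd_of_dvd_mul_right hdvd).trans h2m32
    · left
      have hnd : ¬ p ∣ (Y - 1) := by
        intro h2
        have h3 : p ∣ 2 := by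
          have h4 := Nat.dvd_sub h1 h2
          have he : Y + 1 - (Y - 1) = 2 := by omega
          rwa [he] at h4
        have := Nat.le_of_dvd (by norm_num) h3; omega
      have hcop : Nat.Coprime (Y - 1) (p ^ n) :=
        Nat.Coprime.pow_right _ (hp.coprime_iff_not_dvd.mpr hnd).symm
      have hdvd : (Y - 1) ∣ 2 ^ m * p ^ n := by rw [← hfac]; exact dvd_mul_right _ _
      exact (hcop.dvd_of_dvd_mul_right hdvd).trans h2m32
  have hYle : Y ≤ 33 := by
    rcases hd with h1 | h1 <;> have := Nat.le_of_dvd (by norm_num) h1 <;> omega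
  clear hYY hpdvd h2m32 hmul h8 h hℓ
  subst hk
  interval_cases Y <;> interval_cases m <;>
    first
      | omega
      | ((first
          | (have hc : p ^ n = 3 := by omega
             obtain ⟨rfl, rfl⟩ := pp_aux p n 3 1 hp (by norm_num) hn (by norm_num [hc]))
          | (have hc : p ^ n = 5 := by omega
             obtain ⟨rfl, rfl⟩ := pp_aux p n 5 1 hp (by norm_num) hn (by norm_num [hc]))
          | (have hc : p ^ n = 7 := by omega
             obtain ⟨rfl, rfl⟩ := pp_aux p n 7 1 hp (by norm_num) hn (by norm_num [hc]))
          | (have hc : p ^ n = 9 := by omega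
             obtain ⟨rfl, rfl⟩ := pp_aux p n 3 2 hp (by norm_num) hn (by norm_num [hc])))
         have hXle : X ≤ 17 :=
           le_trans (Nat.le_self_pow (show k ≠ 0 by omega) X) (by omega)
         have h2kle : 2 ^ k ≤ 17 :=
           le_trans (Nat.pow_le_pow_left (show 2 ≤ X by omega) k) (by omega)
         have hkle : k ≤ 4 := by
           by_contra hgt
           push_neg at hgt
           have h32 : (32:ℕ) ≤ 2 ^ k := by
             calc (32:ℕ) = 2 ^ 5 := by norm_num
             _ ≤ 2 ^ k := Nat.pow_le_pow_right (by norm_num) hgt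
           omega
         interval_cases X <;> interval_cases k <;>
           ((try norm_num at hXk) <;> norm_num))
end

section
/- Let p, q be distinct odd primes and X, ℓ, m, n positive integers with X > 1, ℓ > 1. If X^ℓ - 1 = p^m · q^n and ℓ is even, then there is ζ ∈ {1, -1} with X^{ℓ/2} + ζ = p^m and X^{ℓ/2} - ζ = q^n. -/
private lemma aux_split (p q a b m n : ℕ) (hp : p.Prime) (hq : q.Prime)
    (hab : a * b = p ^ m * q ^ n)
    (hpb : ¬ p ∣ b) (hqa : ¬ q ∣ a) (ha : 0 < a) (hb : 0 < b) :
    a = p ^ m ∧ b = q ^ n := by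
  have hcq : Nat.Coprime a (q ^ n) := ((hq.coprime_iff_not_dvd).2 hqa).symm.pow_right n
  have hcp : Nat.Coprime b (p ^ m) := ((hp.coprime_iff_not_dvd).2 hpb).symm.pow_right m
  have hda : a ∣ p ^ m := hcq.dvd_of_dvd_mul_right ⟨b, hab.symm⟩
  have hdb : b ∣ q ^ n := hcp.dvd_of_dvd_mul_left ⟨a, by rw [← hab]; ring⟩
  obtain ⟨c, hc⟩ := hda
  obtain ⟨d, hd⟩ := hdb
  have hmul : (a * b) * (c * d) = (a * b) * 1 := by
    calc (a * b) * (c * d) = (a * c) * (b * d) := by ring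
    _ = p ^ m * q ^ n := by rw [← hc, ← hd]
    _ = (a * b) * 1 := by rw [mul_one, hab]
  have hcd : c * d = 1 := Nat.eq_of_mul_eq_mul_left (Nat.mul_pos ha hb) hmul
  have hc1 : c = 1 := Nat.dvd_one.1 ⟨d, hcd.symm⟩
  have hd1 : d = 1 := Nat.dvd_one.1 ⟨c, by rw [← hcd]; ring⟩
  subst hc1; subst hd1
  simp at hc hd
  exact ⟨hc.symm, hd.symm⟩

theorem stmt_8 (p q X ℓ m n : ℕ) (hp : p.Prime) (hpodd : Odd p)
    (hq : q.Prime) (hqodd : Odd q) (hpq : p ≠ q)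
    (hX : 1 < X) (hℓ : 1 < ℓ) (hℓeven : Even ℓ) (hm : 0 < m) (hn : 0 < n)
    (h : X ^ ℓ - 1 = p ^ m * q ^ n) :
    ∃ ζ : ℤ, (ζ = 1 ∨ ζ = -1) ∧
      (X : ℤ) ^ (ℓ / 2) + ζ = (p : ℤ) ^ m ∧ (X : ℤ) ^ (ℓ / 2) - ζ = (q : ℤ) ^ n := by
  obtain ⟨k, hk⟩ := hℓeven
  have hk2 : ℓ = 2 * k := by omega
  have hkpos : 0 < k := by omega
  have hk2' : ℓ / 2 = k := by omega
  have hXk : 2 ≤ X ^ k := by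
    have h1 : X ^ 1 ≤ X ^ k := Nat.pow_le_pow_right (by omega) hkpos
    simp at h1; omega
  set a := X ^ k - 1 with hadef
  set b := X ^ k + 1 with hbdef
  have hXkk : X ^ ℓ = X ^ k * X ^ k := by rw [hk2, two_mul, pow_add]
  have hab : a * b = p ^ m * q ^ n := by
    rw [← h, hXkk, hadef, hbdef]
    have h2 : 1 ≤ X ^ k * X ^ k := Nat.one_le_iff_ne_zero.2 (by positivity)
    zify [show 1 ≤ X ^ k by omega, h2]
    ring
  -- sizes of p^m, q^n
  have hp3 : 3 ≤ p := by obtain ⟨t, ht⟩ := hpodd; have := hp.two_le; omega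
  have hq3 : 3 ≤ q := by obtain ⟨t, ht⟩ := hqodd; have := hq.two_le; omega
  have hpm3 : 3 ≤ p ^ m := le_trans hp3 (Nat.le_self_pow hm.ne' p)
  have hqn3 : 3 ≤ q ^ n := le_trans hq3 (Nat.le_self_pow hn.ne' q)
  -- X is even, so X^k is even
  have hoddrhs : Odd (p ^ m * q ^ n) := hpodd.pow.mul hqodd.pow
  have h44 : 4 ≤ X ^ k * X ^ k := by
    calc (4:ℕ) = 2 * 2 := rfl
    _ ≤ X ^ k * X ^ k := Nat.mul_le_mul hXk hXk
  have hEXl : Even (X ^ ℓ) := by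
    obtain ⟨t, ht⟩ := hoddrhs
    exact ⟨t + 1, by omega⟩
  have hXeven : Even X := (Nat.even_pow.mp hEXl).1
  have hEXk : 2 ∣ X ^ k := (Nat.even_pow.mpr ⟨hXeven, hkpos.ne'⟩).two_dvd
  have ha2 : ¬ 2 ∣ a := by omega
  have hb2 : ¬ 2 ∣ b := by omega
  have hapos : 0 < a := by omega
  have hbpos : 0 < b := by omega
  -- a and b are coprime
  have hcop : Nat.Coprime a b := by
    have hg2 : Nat.gcd a b ∣ 2 := by
      have := Nat.dvd_sub (Nat.gcd_dvd_right a b) (Nat.gcd_dvd_left a b)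
      have hba : b - a = 2 := by omega
      rwa [hba] at this
    rcases (Nat.dvd_prime Nat.prime_two).1 hg2 with h1 | h2
    · exact h1
    · exact absurd (h2 ▸ Nat.gcd_dvd_left a b) ha2
  -- which factor each prime divides
  have hpab : p ∣ a * b := by
    rw [hab]; exact dvd_mul_of_dvd_left (dvd_pow_self p hm.ne') _
  have hqab : q ∣ a * b := by
    rw [hab]; exact dvd_mul_of_dvd_right (dvd_pow_self q hn.ne') _
  have notboth : ∀ r : ℕ, r.Prime → r ∣ a → r ∣ b → False := by
    intro r hr hra hrb
    have := Nat.dvd_gcd hra hrb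
    rw [hcop] at this
    exact absurd (Nat.dvd_one.1 this) hr.one_lt.ne'
  rcases hp.dvd_mul.1 hpab with hpa | hpb <;> rcases hq.dvd_mul.1 hqab with hqa | hqb
  · -- both divide a : then b = 1, contradiction
    have hnpb : ¬ p ∣ b := fun hh => notboth p hp hpa hh
    have hnqb : ¬ q ∣ b := fun hh => notboth q hq hqa hh
    have hbcop : Nat.Coprime b (p ^ m * q ^ n) :=
      (((hp.coprime_iff_not_dvd).2 hnpb).symm.pow_right m).mul_right
        (((hq.coprime_iff_not_dvd).2 hnqb).symm.pow_right n)
    have hb1 : b = 1 := hbcop.eq_one_of_dvd ⟨a, by rw [← hab]; ring⟩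
    omega
  · -- p ∣ a, q ∣ b : a = p^m, b = q^n, ζ = -1
    have hnpb : ¬ p ∣ b := fun hh => notboth p hp hpa hh
    have hnqa : ¬ q ∣ a := fun hh => notboth q hq hh hqb
    obtain ⟨ha', hb'⟩ := aux_split p q a b m n hp hq hab hnpb hnqa hapos hbpos
    simp only [hadef] at ha'
    simp only [hbdef] at hb'
    have ha'' : (X : ℤ) ^ k - 1 = (p : ℤ) ^ m := by
      zify [show 1 ≤ X ^ k by omega] at ha'; exact ha'
    have hb'' : (X : ℤ) ^ k + 1 = (q : ℤ) ^ n := by exact_mod_cast hb'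
    exact ⟨-1, Or.inr rfl, by rw [hk2']; linarith, by rw [hk2']; linarith⟩
  · -- q ∣ a, p ∣ b : a = q^n, b = p^m, ζ = 1
    have hnqb : ¬ q ∣ b := fun hh => notboth q hq hqa hh
    have hnpa : ¬ p ∣ a := fun hh => notboth p hp hh hpb
    have hab' : a * b = q ^ n * p ^ m := by rw [hab]; ring
    obtain ⟨ha', hb'⟩ := aux_split q p a b n m hq hp hab' hnqb hnpa hapos hbpos
    simp only [hadef] at ha'
    simp only [hbdef] at hb'
    have ha'' : (X : ℤ) ^ k - 1 = (q : ℤ) ^ n := by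
      zify [show 1 ≤ X ^ k by omega] at ha'; exact ha'
    have hb'' : (X : ℤ) ^ k + 1 = (p : ℤ) ^ m := by exact_mod_cast hb'
    exact ⟨1, Or.inl rfl, by rw [hk2']; linarith, by rw [hk2']; linarith⟩
  · -- both divide b : then a = 1, so X^k = 2, contradiction with sizes
    have hnpa : ¬ p ∣ a := fun hh => notboth p hp hh hpb
    have hnqa : ¬ q ∣ a := fun hh => notboth q hq hh hqb
    have hacop : Nat.Coprime a (p ^ m * q ^ n) :=
      (((hp.coprime_iff_not_dvd).2 hnpa).symm.pow_right m).mul_right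
        (((hq.coprime_iff_not_dvd).2 hnqa).symm.pow_right n)
    have ha1 : a = 1 := hacop.eq_one_of_dvd ⟨b, hab.symm⟩
    have : b = p ^ m * q ^ n := by rw [← hab, ha1, one_mul]
    have h9 : 9 ≤ p ^ m * q ^ n := by
      calc (9:ℕ) = 3 * 3 := rfl
      _ ≤ p ^ m * q ^ n := Nat.mul_le_mul hpm3 hqn3
    omega
end

section
/- Let p, q be distinct odd primes and X, ℓ, m, n positive integers with X > 2, ℓ > 1, ℓ odd. If X^ℓ - 1 = p^m · q^n, then one of the following holds: (a) ℓ = p, m > 1, X - 1 = p^{m-1}, (X^p - 1)/(X - 1) = p·q^n and q ≡ 1 (mod 2p); (b) ℓ = q, n > 1, X - 1 = q^{n-1}, (X^q - 1)/(X - 1) = p^m·q and p ≡ 1 (mod 2q); (c) ℓ is an odd prime, X - 1 = p^m, (X^ℓ - 1)/(X - 1) = q^n and q ≡ 1 (mod 2ℓ); (d) ℓ is an odd prime, X - 1 = q^n, (X^ℓ - 1)/(X - 1) = p^m and p ≡ 1 (mod 2ℓ). -/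
/-!
Write `Φ_r(Z) = ∑_{i<r} Z^i`. If an odd prime `t` divides `Z - 1`, lifting the exponent gives
`v_t(Φ_r(Z)) = v_t(r)`; since `Φ_r(Z) > r` for `Z, r ≥ 2`, an odd `Φ_r(Z)` therefore has a prime
factor not dividing `Z - 1`.

Now `X - 1 ∣ p^m q^n`, say `p ∣ X - 1`. For every prime `r ∣ ℓ`, `Φ_r(X) ∣ p^m q^n` then has the
prime factor `q ∤ X - 1`, so `X` has order `r` modulo `q`. Hence `ℓ` is a power of a single prime
`r`, and `r² ∣ ℓ` is impossible because `Φ_r(X^r) ∣ p^m q^n` would need a prime factor not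
dividing `X^r - 1`. So `ℓ = r` is prime, `ℓ ∣ q - 1`, `X - 1 = p^a`, `Φ_ℓ(X) = p^(m-a) q^n`, and
`p^(m-a) ∣ ℓ` by the valuation formula, which leaves the two cases `m = a` and `ℓ = p, m = a + 1`.
-/

open Finset

section GeomSum

variable {Z r : ℕ}

lemma geom_sum_dvd_pow_sub_one (hZ : 1 ≤ Z) {k : ℕ} (h : r ∣ k) :
    (∑ i ∈ range r, Z ^ i) ∣ Z ^ k - 1 :=
  (geom_sum_mul_of_one_le hZ r ▸ dvd_mul_right _ _).trans (Nat.pow_sub_one_dvd_pow_sub_one Z h)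

lemma lt_geom_sum (hZ : 2 ≤ Z) (hr : 2 ≤ r) : r < ∑ i ∈ range r, Z ^ i := by
  obtain ⟨s, rfl⟩ : ∃ s, r = s + 1 := ⟨r - 1, by omega⟩
  have : s * 2 ≤ ∑ i ∈ range s, Z ^ (i + 1) := by
    simpa using card_nsmul_le_sum (range s) _ 2 fun i _ => hZ.trans (Nat.le_self_pow (by omega) Z)
  rw [sum_range_succ', pow_zero]
  omega

variable {p : ℕ} [Fact p.Prime]

lemma padicValNat_geom_sum (hp : Odd p) (hZ : 1 ≤ Z) (hpZ : p ∣ Z - 1) (hr : r ≠ 0) :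
    padicValNat p (∑ i ∈ range r, Z ^ i) = padicValNat p r := by
  rcases hZ.eq_or_lt with rfl | hZ
  · simp
  have hpZ' : ¬ p ∣ Z := fun h => by
    have := Nat.dvd_sub h hpZ
    rw [Nat.sub_sub_self hZ.le] at this
    exact (Fact.out : p.Prime).not_dvd_one this
  have hlte := padicValNat.pow_sub_pow hp hZ (by simpa using hpZ) hpZ' hr
  rw [one_pow, ← geom_sum_mul_of_one_le hZ.le,
    padicValNat.mul (geom_sum_pos (Nat.zero_le Z) hr).ne' (by omega)] at hlte
  omega

lemma pow_dvd_geom_sum_iff (hp : Odd p) (hZ : 1 ≤ Z) (hpZ : p ∣ Z - 1) (hr : r ≠ 0) {k : ℕ} :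
    p ^ k ∣ ∑ i ∈ range r, Z ^ i ↔ p ^ k ∣ r := by
  rw [padicValNat_dvd_iff_le (geom_sum_pos (Nat.zero_le Z) hr).ne', padicValNat_dvd_iff_le hr,
    padicValNat_geom_sum hp hZ hpZ hr]

lemma exists_prime_dvd_geom_sum_not_dvd_sub_one (hZ : 2 ≤ Z) (hr : 2 ≤ r)
    (hodd : Odd (∑ i ∈ range r, Z ^ i)) :
    ∃ t, t.Prime ∧ t ∣ ∑ i ∈ range r, Z ^ i ∧ ¬ t ∣ Z - 1 := by
  by_contra! h
  have hdvd : (∑ i ∈ range r, Z ^ i) ∣ r := by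
    refine (Nat.dvd_iff_prime_pow_dvd_dvd _ _).2 fun t k ht htk => ?_
    rcases k.eq_zero_or_pos with rfl | hk
    · simp
    have htΦ : t ∣ ∑ i ∈ range r, Z ^ i := (dvd_pow_self t hk.ne').trans htk
    have := Fact.mk ht
    exact (pow_dvd_geom_sum_iff (hodd.of_dvd_nat htΦ) (by omega) (h t ht htΦ) (by omega)).1 htk
  exact (lt_geom_sum hZ hr).not_ge (Nat.le_of_dvd (by omega) hdvd)

end GeomSum

lemma eq_or_eq_of_prime_dvd_pow_mul_pow {t p q m n : ℕ} (ht : t.Prime) (hp : p.Prime)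
    (hq : q.Prime) (h : t ∣ p ^ m * q ^ n) : t = p ∨ t = q :=
  (ht.dvd_mul.1 h).imp (fun h => (Nat.prime_dvd_prime_iff_eq ht hp).1 (ht.dvd_of_dvd_pow h))
    (fun h => (Nat.prime_dvd_prime_iff_eq ht hq).1 (ht.dvd_of_dvd_pow h))

lemma natCast_pow_eq_one_iff_dvd {q X k : ℕ} (hX : 1 ≤ X) :
    (X : ZMod q) ^ k = 1 ↔ q ∣ X ^ k - 1 := by
  rw [← Nat.modEq_iff_dvd' (Nat.one_le_pow _ _ hX), ← ZMod.natCast_eq_natCast_iff]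
  push_cast
  exact eq_comm

lemma modEq_one_of_orderOf_eq {q ℓ : ℕ} [Fact q.Prime] (hq : Odd q) (hℓ : Odd ℓ) {x : ZMod q}
    (h : orderOf x = ℓ) : q ≡ 1 [MOD 2 * ℓ] := by
  have hx : x ≠ 0 := by
    rintro rfl
    have := pow_orderOf_eq_one (0 : ZMod q)
    rw [h, zero_pow hℓ.pos.ne'] at this
    exact zero_ne_one this
  have h2 : 2 ∣ q - 1 := (Nat.Odd.sub_odd hq odd_one).two_dvd
  have hℓq : ℓ ∣ q - 1 := h ▸ ZMod.orderOf_dvd_card_sub_one hx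
  exact ((Nat.modEq_iff_dvd' hq.pos).2
    (Nat.Coprime.mul_dvd_of_dvd_of_dvd (Nat.coprime_two_left.2 hℓ) h2 hℓq)).symm

lemma exists_sub_one_eq_pow {p q X ℓ m n : ℕ} (hp : p.Prime) (hq : q.Prime) (hX : 1 ≤ X)
    (h : X ^ ℓ - 1 = p ^ m * q ^ n) (hqX : ¬ q ∣ X - 1) :
    ∃ a ≤ m, X - 1 = p ^ a ∧ ∑ i ∈ range ℓ, X ^ i = p ^ (m - a) * q ^ n := by
  have hgeom := geom_sum_mul_of_one_le hX ℓ
  have hcop : Nat.Coprime (X - 1) (q ^ n) :=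
    .pow_right n (Nat.coprime_comm.1 (hq.coprime_iff_not_dvd.2 hqX))
  have hXp : X - 1 ∣ p ^ m := hcop.dvd_of_dvd_mul_right (h ▸ hgeom ▸ dvd_mul_left _ _)
  obtain ⟨a, ham, ha⟩ := (Nat.dvd_prime_pow hp).1 hXp
  refine ⟨a, ham, ha, Nat.eq_of_mul_eq_mul_right (pow_pos hp.pos a) ?_⟩
  calc (∑ i ∈ range ℓ, X ^ i) * p ^ a = X ^ ℓ - 1 := by rw [← ha, hgeom]
    _ = p ^ (m - a) * q ^ n * p ^ a := by
      rw [h, mul_right_comm, ← pow_add, Nat.sub_add_cancel ham]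

section DvdSubOne

variable {p q X ℓ m n : ℕ}

lemma dvd_geom_sum_of_dvd_sub_one (hp : p.Prime) (hpodd : Odd p) (hq : q.Prime) (hqodd : Odd q)
    {Z r : ℕ} (hZ : 2 ≤ Z) (hr : 2 ≤ r) (hpZ : p ∣ Z - 1)
    (h : (∑ i ∈ range r, Z ^ i) ∣ p ^ m * q ^ n) :
    q ∣ ∑ i ∈ range r, Z ^ i ∧ ¬ q ∣ Z - 1 := by
  obtain ⟨t, ht, htΦ, htZ⟩ := exists_prime_dvd_geom_sum_not_dvd_sub_one hZ hr
    ((hpodd.pow.mul hqodd.pow).of_dvd_nat h)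
  obtain rfl | rfl := eq_or_eq_of_prime_dvd_pow_mul_pow ht hp hq (htΦ.trans h)
  · exact absurd hpZ htZ
  · exact ⟨htΦ, htZ⟩

lemma orderOf_eq_of_dvd_sub_one (hp : p.Prime) (hpodd : Odd p) (hq : q.Prime) (hqodd : Odd q)
    (hX : 2 < X) (h : X ^ ℓ - 1 = p ^ m * q ^ n) (hpX : p ∣ X - 1) {r : ℕ} (hr : r.Prime)
    (hrℓ : r ∣ ℓ) : ¬ q ∣ X - 1 ∧ orderOf (X : ZMod q) = r := by
  obtain ⟨hqΦ, hqX⟩ := dvd_geom_sum_of_dvd_sub_one hp hpodd hq hqodd hX.le hr.two_le hpX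
    (h ▸ geom_sum_dvd_pow_sub_one (by omega) hrℓ)
  have := Fact.mk hr
  refine ⟨hqX, orderOf_eq_prime ?_ ?_⟩
  · exact (natCast_pow_eq_one_iff_dvd (by omega)).2
      (hqΦ.trans (geom_sum_dvd_pow_sub_one (by omega) dvd_rfl))
  · rw [Ne, ← pow_one (X : ZMod q), natCast_pow_eq_one_iff_dvd (by omega), pow_one]
    exact hqX

lemma prime_of_dvd_sub_one (hp : p.Prime) (hpodd : Odd p) (hq : q.Prime) (hqodd : Odd q)
    (hX : 2 < X) (hℓ : 1 < ℓ) (h : X ^ ℓ - 1 = p ^ m * q ^ n) (hpX : p ∣ X - 1) : ℓ.Prime := by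
  have hr := Nat.minFac_prime (show ℓ ≠ 1 by omega)
  set r := ℓ.minFac
  obtain ⟨k, hk⟩ : r ∣ ℓ := Nat.minFac_dvd ℓ
  suffices k = 1 by rwa [hk, this, mul_one]
  by_contra hk1
  have horder := fun (r : ℕ) (hr : r.Prime) =>
    orderOf_eq_of_dvd_sub_one hp hpodd hq hqodd hX h hpX hr
  have hordr := (horder r hr (Nat.minFac_dvd ℓ)).2
  have hkr : k.minFac = r := (horder _ (Nat.minFac_prime hk1)
    (hk ▸ dvd_mul_of_dvd_right k.minFac_dvd r)).2.symm.trans hordr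
  have hqXr : q ∣ X ^ r - 1 :=
    (natCast_pow_eq_one_iff_dvd (by omega)).1 (hordr ▸ pow_orderOf_eq_one _)
  have hΦ : (∑ i ∈ range r, (X ^ r) ^ i) ∣ p ^ m * q ^ n := by
    rw [← h, hk, pow_mul]
    exact geom_sum_dvd_pow_sub_one (Nat.one_le_pow _ _ (by omega)) (hkr ▸ k.minFac_dvd)
  exact (dvd_geom_sum_of_dvd_sub_one hp hpodd hq hqodd
    (hX.le.trans (Nat.le_self_pow hr.ne_zero X)) hr.two_le
    (hpX.trans (Nat.sub_one_dvd_pow_sub_one X r)) hΦ).2 hqXr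

theorem cases_of_dvd_sub_one (hp : p.Prime) (hpodd : Odd p) (hq : q.Prime) (hqodd : Odd q)
    (hX : 2 < X) (hℓ : 1 < ℓ) (hℓodd : Odd ℓ) (h : X ^ ℓ - 1 = p ^ m * q ^ n)
    (hpX : p ∣ X - 1) :
    (ℓ = p ∧ 1 < m ∧ X - 1 = p ^ (m - 1) ∧
      (∑ i ∈ range p, X ^ i) = p * q ^ n ∧ q ≡ 1 [MOD 2 * p]) ∨
    (ℓ.Prime ∧ X - 1 = p ^ m ∧
      (∑ i ∈ range ℓ, X ^ i) = q ^ n ∧ q ≡ 1 [MOD 2 * ℓ]) := by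
  have hℓp := prime_of_dvd_sub_one hp hpodd hq hqodd hX hℓ h hpX
  obtain ⟨hqX, hord⟩ := orderOf_eq_of_dvd_sub_one hp hpodd hq hqodd hX h hpX hℓp dvd_rfl
  have := Fact.mk hq
  have hqmod : q ≡ 1 [MOD 2 * ℓ] := modEq_one_of_orderOf_eq hqodd hℓodd hord
  obtain ⟨a, ham, hXa, hΦ⟩ := exists_sub_one_eq_pow hp hq (by omega) h hqX
  have hdvd : p ^ (m - a) ∣ ℓ := by
    have := Fact.mk hp
    exact (pow_dvd_geom_sum_iff hpodd (by omega) hpX hℓp.ne_zero).1 (hΦ ▸ dvd_mul_right _ _)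
  rcases (Nat.dvd_prime hℓp).1 hdvd with h1 | h1
  · have hma : m - a = 0 := (Nat.pow_eq_one.1 h1).resolve_left hp.ne_one
    right
    refine ⟨hℓp, by rw [hXa, show a = m by omega], by rw [hΦ, hma, pow_zero, one_mul], hqmod⟩
  · obtain ⟨rfl, hma⟩ := (hℓp.pow_eq_iff).1 h1
    have ha : a ≠ 0 := by rintro rfl; simp at hXa; omega
    left
    refine ⟨rfl, by omega, by rw [hXa, show m - 1 = a by omega], by rw [hΦ, hma, pow_one], hqmod⟩

end DvdSubOne

theorem stmt_9_general (p q X ℓ m n : ℕ) (hp : p.Prime) (hpodd : Odd p)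
    (hq : q.Prime) (hqodd : Odd q)
    (hX : 2 < X) (hℓ : 1 < ℓ) (hℓodd : Odd ℓ)
    (h : X ^ ℓ - 1 = p ^ m * q ^ n) :
    (ℓ = p ∧ 1 < m ∧ X - 1 = p ^ (m - 1) ∧
      (∑ i ∈ Finset.range p, X ^ i) = p * q ^ n ∧ q ≡ 1 [MOD 2 * p]) ∨
    (ℓ = q ∧ 1 < n ∧ X - 1 = q ^ (n - 1) ∧
      (∑ i ∈ Finset.range q, X ^ i) = p ^ m * q ∧ p ≡ 1 [MOD 2 * q]) ∨
    (ℓ.Prime ∧ X - 1 = p ^ m ∧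
      (∑ i ∈ Finset.range ℓ, X ^ i) = q ^ n ∧ q ≡ 1 [MOD 2 * ℓ]) ∨
    (ℓ.Prime ∧ X - 1 = q ^ n ∧
      (∑ i ∈ Finset.range ℓ, X ^ i) = p ^ m ∧ p ≡ 1 [MOD 2 * ℓ]) := by
  obtain hpX | hqX : p ∣ X - 1 ∨ q ∣ X - 1 := by
    have ht := Nat.minFac_prime (show X - 1 ≠ 1 by omega)
    obtain he | he := eq_or_eq_of_prime_dvd_pow_mul_pow ht hp hq
      ((Nat.minFac_dvd _).trans (h ▸ Nat.sub_one_dvd_pow_sub_one X ℓ))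
    exacts [.inl (he ▸ Nat.minFac_dvd _), .inr (he ▸ Nat.minFac_dvd _)]
  · rcases cases_of_dvd_sub_one hp hpodd hq hqodd hX hℓ hℓodd h hpX with ha | hc
    · exact .inl ha
    · exact .inr (.inr (.inl hc))
  · rcases cases_of_dvd_sub_one hq hqodd hp hpodd hX hℓ hℓodd (h.trans (mul_comm _ _)) hqX
      with ⟨hℓq, hn, hXq, hΦ, hpmod⟩ | hd
    · exact .inr (.inl ⟨hℓq, hn, hXq, hΦ.trans (mul_comm _ _), hpmod⟩)
    · exact .inr (.inr (.inr hd))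

theorem stmt_9 (p q X ℓ m n : ℕ) (hp : p.Prime) (hpodd : Odd p)
    (hq : q.Prime) (hqodd : Odd q) (hpq : p ≠ q)
    (hX : 2 < X) (hℓ : 1 < ℓ) (hℓodd : Odd ℓ) (hm : 0 < m) (hn : 0 < n)
    (h : X ^ ℓ - 1 = p ^ m * q ^ n) :
    (ℓ = p ∧ 1 < m ∧ X - 1 = p ^ (m - 1) ∧
      (∑ i ∈ Finset.range p, X ^ i) = p * q ^ n ∧ q ≡ 1 [MOD 2 * p]) ∨
    (ℓ = q ∧ 1 < n ∧ X - 1 = q ^ (n - 1) ∧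
      (∑ i ∈ Finset.range q, X ^ i) = p ^ m * q ∧ p ≡ 1 [MOD 2 * q]) ∨
    (ℓ.Prime ∧ X - 1 = p ^ m ∧
      (∑ i ∈ Finset.range ℓ, X ^ i) = q ^ n ∧ q ≡ 1 [MOD 2 * ℓ]) ∨
    (ℓ.Prime ∧ X - 1 = q ^ n ∧
      (∑ i ∈ Finset.range ℓ, X ^ i) = p ^ m ∧ p ≡ 1 [MOD 2 * ℓ]) :=
  stmt_9_general p q X ℓ m n hp hpodd hq hqodd hX hℓ hℓodd h
end

section
/- Let p be an odd prime and r, s, x, z, t positive integers with r > 1, x > z ≥ 2 and z an odd prime satisfying p ≡ 1 (mod 2z). If 2^r + p^s - 1 = 2^{rx} and ((2^r+p^s)^z - 1)/(2^r+p^s-1) = p^t, then a contradiction follows; i.e., there are no such integers. -/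
/-!
Write `N = 2 ^ r + p ^ s`. Since `N ≡ 2 ^ r (mod p ^ s)` and the sum `1 + N + ⋯ + N ^ (z - 1)`
is a power of `p` exceeding `p ^ s`, the prime power `p ^ s` divides
`1 + 2 ^ r + ⋯ + 2 ^ (r (z - 1)) < 2 ^ (r z)`. On the other hand `p ^ s = 2 ^ (r x) + 1 - 2 ^ r`
with `x > z`, which is larger than `2 ^ (r z)`.
-/

open Finset

theorem pow_dvd_geom_sum_of_geom_sum_add_eq_pow {a p s t z : ℕ} (hp : 1 < p) (hz : 2 ≤ z)
    (h : ∑ i ∈ range z, (a + p ^ s) ^ i = p ^ t) : p ^ s ∣ ∑ i ∈ range z, a ^ i := by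
  have hst : s ≤ t := by
    refine ((Nat.pow_lt_pow_iff_right hp).mp ?_).le
    calc p ^ s < ∑ i ∈ range 2, (a + p ^ s) ^ i := by simp [sum_range_succ]; omega
      _ ≤ ∑ i ∈ range z, (a + p ^ s) ^ i :=
          sum_le_sum_of_subset (range_subset_range.mpr hz)
      _ = p ^ t := h
  have hmod : ∑ i ∈ range z, (a + p ^ s) ^ i ≡ ∑ i ∈ range z, a ^ i [MOD p ^ s] :=
    Nat.ModEq.sum fun i _ => Nat.add_modEq_right.pow i
  rw [h] at hmod
  exact (hmod.dvd_iff dvd_rfl).mp (pow_dvd_pow p hst)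

theorem stmt_11_general (p r s x z t : ℕ) (hp : p.Prime)
    (hr : 1 < r)
    (hz : z.Prime) (hxz : x > z)
    (h1 : 2 ^ r + p ^ s - 1 = 2 ^ (r * x))
    (h2 : ∑ i ∈ Finset.range z, (2 ^ r + p ^ s) ^ i = p ^ t) : False := by
  have hq : 2 ≤ 2 ^ r := Nat.le_self_pow (by omega) 2
  have hdvd := pow_dvd_geom_sum_of_geom_sum_add_eq_pow hp.one_lt hz.two_le h2
  have hpos : 0 < ∑ i ∈ range z, (2 ^ r) ^ i :=
    sum_pos (fun i _ => by positivity) ⟨0, mem_range.mpr hz.pos⟩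
  have hsmall : p ^ s < 2 ^ (r * z) := by
    rw [pow_mul]
    exact (Nat.le_of_dvd hpos hdvd).trans_lt (Nat.geomSum_lt hq fun k hk => mem_range.mp hk)
  have hx : 2 ^ (r * z + 1) ≤ 2 ^ (r * x) :=
    Nat.pow_le_pow_right two_pos (by nlinarith)
  have hr_le : 2 ^ r ≤ 2 ^ (r * z) :=
    Nat.pow_le_pow_right two_pos (Nat.le_mul_of_pos_right r hz.pos)
  rw [pow_succ] at hx
  omega

theorem stmt_11 (p r s x z t : ℕ) (hp : p.Prime) (hpodd : Odd p)
    (hr : 1 < r) (hs : 0 < s) (ht : 0 < t)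
    (hz : z.Prime) (hzodd : Odd z) (hxz : x > z)
    (hpmod : p ≡ 1 [MOD 2 * z])
    (h1 : 2 ^ r + p ^ s - 1 = 2 ^ (r * x))
    (h2 : ∑ i ∈ Finset.range z, (2 ^ r + p ^ s) ^ i = p ^ t) : False :=
  stmt_11_general p r s x z t hp hr hz hxz h1 h2
end

section
/- Let p, q be distinct odd primes and r, s, x, t positive integers with x ≥ 3. There are no positive integers such that both p^r + q^s + ζ = p^{rx} and p^r + q^s - ζ = q^t hold for some ζ ∈ {1, -1}. -/
/-!
Write `P = p^r` and `Q = q^s`. The first equation gives `P ∣ Q + ζ` and the second `Q ∣ P - ζ`;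
both quotients are positive, so `P ≤ Q + ζ ≤ P`, i.e. `P = Q + ζ`. Then `p^(rx) = P + Q + ζ = 2P`
is even, whereas it is a power of the odd number `p`.
-/

theorem Int.eq_add_of_dvd_add_of_dvd_sub {P Q ζ : ℤ} (hP : P ∣ Q + ζ) (hQ : Q ∣ P - ζ)
    (hQζ : 0 < Q + ζ) (hPζ : 0 < P - ζ) : P = Q + ζ :=
  le_antisymm (Int.le_of_dvd hQζ hP) (by linarith [Int.le_of_dvd hPζ hQ])

theorem Int.pow_eq_pow_add_of_add_add_eq_pow_of_add_sub_eq_pow {a b ζ : ℤ} {r s x t : ℕ}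
    (ha : 1 < a) (hb : 1 < b) (hr : r ≠ 0) (hs : s ≠ 0) (hx : x ≠ 0) (hζ : |ζ| ≤ 1)
    (h₁ : a ^ r + b ^ s + ζ = a ^ (r * x)) (h₂ : a ^ r + b ^ s - ζ = b ^ t) :
    a ^ r = b ^ s + ζ := by
  obtain ⟨hζ₁, hζ₂⟩ := abs_le.mp hζ
  have hP : a ≤ a ^ r := le_self_pow₀ ha.le hr
  have hQ : b ≤ b ^ s := le_self_pow₀ hb.le hs
  have hst : s ≤ t := ((pow_lt_pow_iff_right₀ hb).mp (by linarith)).le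
  refine Int.eq_add_of_dvd_add_of_dvd_sub ?_ ?_ (by linarith) (by linarith)
  · have : b ^ s + ζ = a ^ (r * x) - a ^ r := by linarith
    exact this ▸ dvd_sub (pow_dvd_pow a (Nat.le_mul_of_pos_right r (Nat.pos_of_ne_zero hx))) dvd_rfl
  · have : a ^ r - ζ = b ^ t - b ^ s := by linarith
    exact this ▸ dvd_sub (pow_dvd_pow b hst) dvd_rfl

theorem stmt_14_general (p q r s x t : ℕ) (hp : p.Prime) (hpodd : Odd p)
    (hq : q.Prime)
    (hr : 0 < r) (hs : 0 < s) (hx : 3 ≤ x) :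
    ¬ ∃ ζ : ℤ, (ζ = 1 ∨ ζ = -1) ∧
      (p : ℤ) ^ r + (q : ℤ) ^ s + ζ = (p : ℤ) ^ (r * x) ∧
      (p : ℤ) ^ r + (q : ℤ) ^ s - ζ = (q : ℤ) ^ t := by
  rintro ⟨ζ, hζ, h₁, h₂⟩
  have hζabs : |ζ| ≤ 1 := by rcases hζ with rfl | rfl <;> norm_num
  have hPQ : (p : ℤ) ^ r = (q : ℤ) ^ s + ζ :=
    Int.pow_eq_pow_add_of_add_add_eq_pow_of_add_sub_eq_pow (mod_cast hp.one_lt)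
      (mod_cast hq.one_lt) hr.ne' hs.ne' (by omega) hζabs h₁ h₂
  have hodd : Odd ((p : ℤ) ^ (r * x)) := ((Int.odd_coe_nat p).mpr hpodd).pow
  rw [← h₁, add_assoc, ← hPQ, ← two_mul] at hodd
  exact Int.not_odd_iff_even.mpr (even_two_mul _) hodd

theorem stmt_14 (p q r s x t : ℕ) (hp : p.Prime) (hpodd : Odd p)
    (hq : q.Prime) (hqodd : Odd q) (hpq : p ≠ q)
    (hr : 0 < r) (hs : 0 < s) (ht : 0 < t) (hx : 3 ≤ x) :
    ¬ ∃ ζ : ℤ, (ζ = 1 ∨ ζ = -1) ∧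
      (p : ℤ) ^ r + (q : ℤ) ^ s + ζ = (p : ℤ) ^ (r * x) ∧
      (p : ℤ) ^ r + (q : ℤ) ^ s - ζ = (q : ℤ) ^ t :=
  stmt_14_general p q r s x t hp hpodd hq hr hs hx
end

section
/- Let p, q be distinct odd primes and r, s, x, t positive integers with x > p and p ≥ 3. There are no such integers satisfying both p^r + q^s - 1 = p^{rx-1} and ((p^r+q^s)^p - 1)/(p^r+q^s-1) = p·q^t with q ≡ 1 (mod 2p). -/
/-!
Put `e = r x - 1`, so that `p^r + q^s = p^e + 1` and `q^s - 1 = p^r (p^(e-r) - 1)`; hence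
`v_p(q - 1) ≤ v_p(q^s - 1) = r`. Expanding `∑_{i<p} (1 + p^e)^i` modulo `p^(2e)` gives
`q^t ≡ 1 + (p-1)/2 · p^e (mod p^(e+1))`, so `v_p(q^t - 1) = e` and lifting the exponent forces
`p^(e-r) ∣ t`. But `q^t < (p^e + 1)^p ≤ q^(ep)` gives `t < e p`, whereas `p^(e-r) ≥ e p`
because `x ≥ 4` makes `r` small compared with `e`.
-/

open Finset

theorem padicValNat_pow_mul {p k m : ℕ} [Fact p.Prime] (hm : ¬p ∣ m) :
    padicValNat p (p ^ k * m) = k := by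
  have hm0 : m ≠ 0 := by rintro rfl; exact hm (dvd_zero p)
  rw [padicValNat.mul (pow_ne_zero k (NeZero.ne p)) hm0, padicValNat.prime_pow,
    padicValNat.eq_zero_of_not_dvd hm, add_zero]

theorem padicValNat_eq_of_modEq {p k m n : ℕ} [Fact p.Prime] (hm : ¬p ∣ m)
    (h : n ≡ p ^ k * m [MOD p ^ (k + 1)]) : padicValNat p n = k := by
  obtain ⟨n', rfl⟩ : p ^ k ∣ n :=
    Nat.modEq_zero_iff_dvd.mp ((h.of_dvd (pow_dvd_pow p k.le_succ)).trans
      (Nat.modEq_zero_iff_dvd.mpr (dvd_mul_right _ _)))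
  rw [pow_succ] at h
  have hn' : n' ≡ m [MOD p] := Nat.ModEq.mul_left_cancel' (pow_ne_zero k (NeZero.ne p)) h
  refine padicValNat_pow_mul fun hn ↦ hm ?_
  exact Nat.modEq_zero_iff_dvd.mp (hn'.symm.trans (Nat.modEq_zero_iff_dvd.mpr hn))

theorem padicValNat_le_of_dvd {p a b : ℕ} [Fact p.Prime] (hb : b ≠ 0) (hab : a ∣ b) :
    padicValNat p a ≤ padicValNat p b :=
  (padicValNat_dvd_iff_le hb).mp (pow_padicValNat_dvd.trans hab)

theorem not_dvd_pow_sub_one {p k : ℕ} (hp : 1 < p) (hk : k ≠ 0) : ¬p ∣ p ^ k - 1 := by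
  intro h
  have := Nat.dvd_sub (dvd_pow_self p hk) h
  rw [Nat.sub_sub_self (Nat.one_le_pow k p (by omega))] at this
  exact hp.ne' (Nat.dvd_one.mp this)

theorem padicValNat_sub_one_of_add_sub_one_eq {p r e n : ℕ} [hp : Fact p.Prime] (hre : r < e)
    (h : p ^ r + n - 1 = p ^ e) : padicValNat p (n - 1) = r := by
  have hB : ¬p ∣ p ^ (e - r) - 1 := not_dvd_pow_sub_one hp.out.one_lt (by omega)
  have hsplit : p ^ r * p ^ (e - r) = p ^ e := pow_mul_pow_sub p hre.le
  have hpos : p ^ r ≤ p ^ r * (p ^ (e - r) - 1) :=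
    Nat.le_mul_of_pos_right _ (Nat.pos_of_ne_zero fun h ↦ hB (h ▸ dvd_zero p))
  rw [Nat.mul_sub_one] at hpos
  rw [show n - 1 = p ^ r * (p ^ (e - r) - 1) by rw [Nat.mul_sub_one]; omega]
  exact padicValNat_pow_mul hB

theorem one_add_pow_modEq (P i : ℕ) : (P + 1) ^ i ≡ 1 + i * P [MOD P ^ 2] := by
  have h := sq_dvd_add_pow_sub_sub (P : ℤ) 1 i
  rw [one_pow, one_pow, one_mul] at h
  rw [← Int.natCast_modEq_iff, Int.modEq_iff_dvd, ← dvd_neg]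
  convert h using 1 <;> push_cast <;> ring

theorem geom_sum_one_add_modEq (P n : ℕ) :
    ∑ i ∈ range n, (P + 1) ^ i ≡ n + P * ∑ i ∈ range n, i [MOD P ^ 2] := by
  calc ∑ i ∈ range n, (P + 1) ^ i ≡ ∑ i ∈ range n, (1 + i * P) [MOD P ^ 2] :=
        Nat.ModEq.sum fun i _ ↦ one_add_pow_modEq P i
    _ = n + P * ∑ i ∈ range n, i := by
        rw [sum_add_distrib, ← sum_mul]; simp [mul_comm]

theorem padicValNat_sub_one_of_geom_sum_eq {p e y : ℕ} [hp : Fact p.Prime] (hodd : Odd p)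
    (he : 2 ≤ e) (h : ∑ i ∈ range p, (p ^ e + 1) ^ i = p * y) :
    padicValNat p (y - 1) = e := by
  obtain ⟨k, hk⟩ := hodd
  have hk0 : 0 < k := by have := hp.out.two_le; omega
  have hsum : ∑ i ∈ range p, i = p * k := by
    apply Nat.eq_of_mul_eq_mul_right two_pos
    rw [sum_range_id_mul_two, show p - 1 = 2 * k by omega]
    ring
  have hmod := geom_sum_one_add_modEq (p ^ e) p
  rw [h, hsum] at hmod
  have hpy : p * y ≡ p * (1 + p ^ e * k) [MOD p * p ^ (2 * e - 1)] := by
    convert hmod using 2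
    · rw [← pow_succ', ← pow_mul]; congr 1; omega
    · ring
  -- cancelling `p` still leaves a modulus `p^(2e-1)` finer than `p^(e+1)`, as `e ≥ 2`
  have hy : y ≡ 1 + p ^ e * k [MOD p ^ (e + 1)] :=
    (hpy.mul_left_cancel' (NeZero.ne p)).of_dvd (pow_dvd_pow p (by omega))
  have hy0 : y ≠ 0 := by
    rintro rfl
    rw [mul_zero, sum_eq_zero_iff] at h
    simpa using h 0 (mem_range.mpr hp.out.pos)
  refine padicValNat_eq_of_modEq (Nat.not_dvd_of_pos_of_lt hk0 (by omega)) ?_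
  refine Nat.ModEq.add_left_cancel' 1 ?_
  rwa [Nat.add_sub_cancel' (Nat.one_le_iff_ne_zero.mpr hy0)]

theorem pow_le_of_padicValNat_pow_sub_one_eq {p q t e : ℕ} [hp : Fact p.Prime] (hodd : Odd p)
    (hq : 1 < q) (hpq : p ∣ q - 1) (he : e ≠ 0) (h : padicValNat p (q ^ t - 1) = e) :
    p ^ (e - padicValNat p (q - 1)) ≤ t := by
  have hq' : ¬p ∣ q := fun hdvd ↦ hp.out.one_lt.ne'
    (Nat.dvd_one.mp (by simpa [Nat.sub_sub_self hq.le] using Nat.dvd_sub hdvd hpq))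
  have ht : t ≠ 0 := by rintro rfl; rw [pow_zero, Nat.sub_self, padicValNat_zero_right] at h; omega
  have hlte := padicValNat.pow_sub_pow hodd hq hpq hq' ht
  rw [one_pow, h] at hlte
  rw [show e - padicValNat p (q - 1) = padicValNat p t by omega]
  exact Nat.le_of_dvd (Nat.pos_of_ne_zero ht) pow_padicValNat_dvd

theorem lt_mul_of_geom_sum_eq {p q e t : ℕ} (hp : 0 < p) (hpq : p < q) (he : e ≠ 0)
    (h : ∑ i ∈ range p, (p ^ e + 1) ^ i = p * q ^ t) : t < e * p := by
  have hpe : p ^ e + 1 ≤ q ^ e := Nat.pow_lt_pow_left hpq he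
  have hqt : q ^ t < q ^ (e * p) :=
    calc q ^ t ≤ p * q ^ t := Nat.le_mul_of_pos_left _ hp
      _ = ∑ i ∈ range p, (p ^ e + 1) ^ i := h.symm
      _ < (p ^ e + 1) ^ p :=
          Nat.geomSum_lt (by have := Nat.one_le_pow e p hp; omega) fun i ↦ mem_range.mp
      _ ≤ q ^ (e * p) := by rw [pow_mul]; exact Nat.pow_le_pow_left hpe p
  exact (Nat.pow_lt_pow_iff_right (by omega)).mp hqt

theorem mul_le_pow_sub {p a n : ℕ} (hp : 3 ≤ p) (h : 2 * a < n) : n * p ≤ p ^ (n - a) := by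
  have hbern : 1 + 2 * (n - a - 1) ≤ 3 ^ (n - a - 1) := by
    have := one_add_mul_le_pow (show (-2 : ℤ) ≤ 2 by norm_num) (n - a - 1)
    rw [mul_comm] at this
    exact_mod_cast this
  calc n * p ≤ 3 ^ (n - a - 1) * p := Nat.mul_le_mul_right p (by omega)
    _ ≤ p ^ (n - a - 1) * p := Nat.mul_le_mul_right p (Nat.pow_le_pow_left hp _)
    _ = p ^ (n - a) := by rw [← pow_succ]; congr 1; omega

theorem stmt_15_general (p q r s x t : ℕ) (hp : p.Prime) (hpodd : Odd p)
    (hr : 0 < r) (hx : x > p)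
    (hqmod : q ≡ 1 [MOD 2 * p])
    (h1 : p ^ r + q ^ s - 1 = p ^ (r * x - 1))
    (h2 : ∑ i ∈ Finset.range p, (p ^ r + q ^ s) ^ i = p * q ^ t) : False := by
  have := Fact.mk hp
  have hp3 : 3 ≤ p := by obtain ⟨k, hk⟩ := hpodd; have := hp.two_le; omega
  set e := r * x - 1
  have h4r : 4 * r ≤ e + 1 := by have := Nat.mul_le_mul_left r (show 4 ≤ x by omega); omega
  have hvs : padicValNat p (q ^ s - 1) = r := padicValNat_sub_one_of_add_sub_one_eq (by omega) h1
  have hqs : q ^ s - 1 ≠ 0 := fun h ↦ by rw [h, padicValNat_zero_right] at hvs; omega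
  have hq1 : 1 < q := by
    by_contra! hq
    have := pow_le_one₀ (Nat.zero_le q) hq (n := s)
    omega
  have hpq : p ∣ q - 1 := (dvd_mul_left p 2).trans ((Nat.modEq_iff_dvd' hq1.le).mp hqmod.symm)
  have ha : padicValNat p (q - 1) ≤ r :=
    hvs ▸ padicValNat_le_of_dvd hqs (by simpa using Nat.sub_dvd_pow_sub_pow q 1 s)
  rw [show p ^ r + q ^ s = p ^ e + 1 by omega] at h2
  have ht_ge : p ^ (e - padicValNat p (q - 1)) ≤ t := pow_le_of_padicValNat_pow_sub_one_eq hpodd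
    hq1 hpq (by omega) (padicValNat_sub_one_of_geom_sum_eq hpodd (by omega) h2)
  have ht_lt : t < e * p :=
    lt_mul_of_geom_sum_eq hp.pos (by have := Nat.le_of_dvd (by omega) hpq; omega) (by omega) h2
  have := mul_le_pow_sub hp3 (show 2 * padicValNat p (q - 1) < e by omega)
  omega

theorem stmt_15 (p q r s x t : ℕ) (hp : p.Prime) (hpodd : Odd p)
    (hq : q.Prime) (hqodd : Odd q) (hpq : p ≠ q)
    (hr : 0 < r) (hs : 0 < s) (ht : 0 < t) (hx : x > p)
    (hqmod : q ≡ 1 [MOD 2 * p])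
    (h1 : p ^ r + q ^ s - 1 = p ^ (r * x - 1))
    (h2 : ∑ i ∈ Finset.range p, (p ^ r + q ^ s) ^ i = p * q ^ t) : False :=
  stmt_15_general p q r s x t hp hpodd hr hx hqmod h1 h2
end

section
/- Let p, q be distinct odd primes, z an odd prime, and r, s, x, t positive integers with x > z. There are no such integers satisfying both p^r + q^s - 1 = p^{rx} and ((p^r+q^s)^z - 1)/(p^r+q^s-1) = q^t with q ≡ 1 (mod 2z). -/
/-!
Write `N = p ^ r + q ^ s = p ^ (r * x) + 1` and `z = n + 1`. The geometric sum `q ^ t` lies between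
`N ^ n` and `2 * N ^ n`, so `q ^ (s * n) < q ^ t`. Since `x > z`, the summand `p ^ r` is tiny
compared with `N`, and Bernoulli's inequality gives `N ^ n ≤ 2 * (q ^ s) ^ n`. Hence
`q ^ (s * n + 1) ≤ q ^ t < 4 * q ^ (s * n)`, i.e. `q < 4`, whereas `q ≡ 1 [MOD 2 * z]` forces `q ≥ 5`.
-/

open Finset

lemma add_pow_le_two_mul_pow {a b n : ℕ} (h : 2 * n * a ≤ a + b) : (a + b) ^ n ≤ 2 * b ^ n := by
  rcases n with _ | m
  · simp
  have bernoulli := pow_add_mul_le_add_pow (a := ((a + b : ℕ) : ℤ)) (b := -(a : ℤ))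
    (by positivity) (by push_cast; omega) (m + 1)
  have hN : (2 * (m + 1) * a : ℤ) * (a + b) ^ m ≤ (a + b) * (a + b) ^ m :=
    mul_le_mul_of_nonneg_right (by exact_mod_cast h) (by positivity)
  push_cast at bernoulli
  simp only [add_neg_cancel_comm] at bernoulli
  zify
  linear_combination 2 * bernoulli + hN

lemma pow_le_geom_sum_lt_two_mul_pow {N : ℕ} (hN : 2 ≤ N) (n : ℕ) :
    N ^ n ≤ ∑ i ∈ range (n + 1), N ^ i ∧ ∑ i ∈ range (n + 1), N ^ i < 2 * N ^ n := by
  rw [sum_range_succ]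
  have := Nat.geomSum_lt hN (s := range n) (fun k hk => mem_range.mp hk)
  omega

lemma two_mul_mul_pow_le_pow_mul {p n r x : ℕ} (hp : 2 ≤ p) (hr : 0 < r) (hx : n < x) :
    2 * n * p ^ r ≤ p ^ (r * x) := by
  obtain ⟨y, rfl⟩ := Nat.exists_eq_add_one_of_ne_zero (by omega : x ≠ 0)
  have h2n : 2 * n ≤ p ^ (r * y) := calc
    2 * n ≤ 2 ^ n := Nat.mul_le_pow (by norm_num) n
    _ ≤ 2 ^ y := Nat.pow_le_pow_right (by norm_num) (by omega)
    _ ≤ p ^ y := Nat.pow_le_pow_left hp y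
    _ ≤ p ^ (r * y) := Nat.pow_le_pow_right (by omega) (Nat.le_mul_of_pos_left y hr)
  rw [mul_add_one, pow_add]
  exact Nat.mul_le_mul_right _ h2n

theorem stmt_16_general (p q z r s x t : ℕ) (hp : p.Prime)
    (hq : q.Prime)
    (hz : z.Prime)
    (hr : 0 < r) (hx : x > z)
    (hqmod : q ≡ 1 [MOD 2 * z])
    (h1 : p ^ r + q ^ s - 1 = p ^ (r * x))
    (h2 : ∑ i ∈ Finset.range z, (p ^ r + q ^ s) ^ i = q ^ t) : False := by
  obtain ⟨n, rfl⟩ := Nat.exists_eq_add_one_of_ne_zero hz.ne_zero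
  have hn : 1 ≤ n := by have := hz.two_le; omega
  have hq5 : 5 ≤ q := by
    have := Nat.le_of_dvd (by have := hq.two_le; omega)
      ((Nat.modEq_iff_dvd' hq.one_lt.le).mp hqmod.symm)
    omega
  have hpr : 0 < p ^ r := pow_pos hp.pos r
  have hqs : 0 < q ^ s := pow_pos hq.pos s
  set N := p ^ r + q ^ s
  have hN : N = p ^ (r * x) + 1 := by omega
  obtain ⟨hlow, hup⟩ := pow_le_geom_sum_lt_two_mul_pow (N := N) (by omega) n
  rw [h2] at hlow hup
  have hst : s * n < t := by
    have : (q ^ s) ^ n < N ^ n := Nat.pow_lt_pow_left (by omega) (by omega)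
    rw [← pow_mul] at this
    exact (Nat.pow_lt_pow_iff_right hq.one_lt).mp (this.trans_le hlow)
  have hpr_small : 2 * n * p ^ r ≤ N :=
    (two_mul_mul_pow_le_pow_mul hp.two_le hr (by omega : n < x)).trans (by omega)
  have hbern : N ^ n ≤ 2 * (q ^ s) ^ n := add_pow_le_two_mul_pow hpr_small
  have hq_lt : q * q ^ (s * n) < 4 * q ^ (s * n) := calc
    q * q ^ (s * n) = q ^ (s * n + 1) := by ring
    _ ≤ q ^ t := Nat.pow_le_pow_right hq.pos hst
    _ < 2 * N ^ n := hup
    _ ≤ 4 * q ^ (s * n) := by rw [pow_mul]; omega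
  have := Nat.lt_of_mul_lt_mul_right hq_lt
  omega

theorem stmt_16 (p q z r s x t : ℕ) (hp : p.Prime) (hpodd : Odd p)
    (hq : q.Prime) (hqodd : Odd q) (hpq : p ≠ q)
    (hz : z.Prime) (hzodd : Odd z)
    (hr : 0 < r) (hs : 0 < s) (ht : 0 < t) (hx : x > z)
    (hqmod : q ≡ 1 [MOD 2 * z])
    (h1 : p ^ r + q ^ s - 1 = p ^ (r * x))
    (h2 : ∑ i ∈ Finset.range z, (p ^ r + q ^ s) ^ i = q ^ t) : False :=
  stmt_16_general p q z r s x t hp hq hz hr hx hqmod h1 h2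
end

section
/- Let k > 1 be a positive integer, p an odd prime, and r, s positive integers with r > 1 and gcd(2^r, p^s) = 1. Then the equation (2^r·k)^x + (p^s·k)^y = ((2^r + p^s)·k)^z has no positive integer solutions (x, y, z) with x > z > y. -/
/-!
Write `a = 2 ^ r`, `b = p ^ s` and `c = a + b`. Cancelling `k ^ y` shows that `k` is a power of `p`,
and comparing `p`-parts reduces the equation to `c ^ z = 2 ^ (r * x) * p ^ W + 1`. By lifting the
exponent, `2 ^ (r * x - v₂ z)` divides `c - 1` or `c + 1`, so `c` is large compared with
`2 ^ (r * x)`. If `p ^ W ∣ b`, this contradicts `c ^ z ≤ 2 ^ (r * x) * b + 1` when `z ≥ 3`; when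
`z = 2`, the factor `c ± 1` divisible by `2` only once is twice a common divisor of `b` and `a ± 1`,
hence small. If `b ∣ p ^ W`, then `b ∣ a ^ z - 1`, and reducing modulo `2 ^ (r * x - v₂ z)` forces
`b` to be small instead.
-/

theorem two_pow_dvd_sub_one_or_add_one_of_dvd_pow_sub_one {c n z : ℕ} (hc : Odd c) (hz : z ≠ 0)
    (h : 2 ^ n ∣ c ^ z - 1) :
    2 ^ (n - padicValNat 2 z) ∣ c - 1 ∨ 2 ^ (n - padicValNat 2 z) ∣ c + 1 := by
  obtain rfl | hc1 : c = 1 ∨ 1 < c := by obtain ⟨e, rfl⟩ := hc; omega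
  · simp
  have hc2 : ¬ 2 ∣ c := by rwa [← even_iff_two_dvd, Nat.not_even_iff_odd]
  have hcz : c ^ z - 1 ≠ 0 := Nat.sub_ne_zero_of_lt (Nat.one_lt_pow hz hc1)
  have hn : n ≤ padicValNat 2 (c ^ z - 1) := (padicValNat_dvd_iff_le hcz).mp h
  have hplus : 1 ≤ padicValNat 2 (c ^ z + 1) :=
    one_le_padicValNat_of_dvd (by omega) (even_iff_two_dvd.mp hc.pow.add_one)
  have hsq : c ^ (2 * z) - 1 = (c ^ z + 1) * (c ^ z - 1) := by
    rw [pow_mul', ← Nat.sq_sub_sq, one_pow]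
  -- lifting the exponent, applied to the even exponent `2 * z`
  have hlte := padicValNat.pow_two_sub_one hc1 hc2 (by omega : 2 * z ≠ 0) (even_two_mul z)
  rw [hsq, padicValNat.mul (by omega) hcz, padicValNat.mul two_ne_zero hz,
    padicValNat_self] at hlte
  -- one of `c - 1`, `c + 1` is `2` modulo `4`
  have hsmall : ¬ 2 ^ 2 ∣ c + 1 ∨ ¬ 2 ^ 2 ∣ c - 1 := by omega
  rw [padicValNat_dvd_iff_le (by omega), padicValNat_dvd_iff_le (by omega)] at hsmall
  refine hsmall.imp (fun _ => ?_) (fun _ => ?_) <;>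
    exact (padicValNat_dvd_iff_le (by omega)).mpr (by omega)

theorem exists_pow_eq_mul_prime_pow_add_one {a p s k x y z : ℕ} (hp : p.Prime) (hpa : ¬ p ∣ a)
    (hk : 1 < k) (hyz : y < z) (hzx : z < x)
    (h : (a * k) ^ x + (p ^ s * k) ^ y = ((a + p ^ s) * k) ^ z) :
    ∃ W, (a + p ^ s) ^ z = a ^ x * p ^ W + 1 := by
  obtain ⟨v, rfl⟩ := Nat.exists_eq_add_of_lt hyz
  obtain ⟨u, rfl⟩ := Nat.exists_eq_add_of_lt hzx
  have hk0 : k ≠ 0 := by omega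
  have h1 : k ^ (v + 1) * (a ^ (y + v + 1 + u + 1) * k ^ (u + 1)) + p ^ (s * y) =
      k ^ (v + 1) * (a + p ^ s) ^ (y + v + 1) := by
    apply mul_left_cancel₀ (pow_ne_zero y hk0)
    rw [mul_pow, mul_pow, mul_pow] at h
    rw [pow_mul]
    convert h using 1 <;> ring
  obtain ⟨e, he⟩ : k ^ (v + 1) ∣ p ^ (s * y) :=
    (Nat.dvd_add_right (dvd_mul_right _ _)).mp (h1 ▸ dvd_mul_right _ _)
  rw [he, ← mul_add] at h1
  have h2 := mul_left_cancel₀ (pow_ne_zero _ hk0) h1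
  obtain ⟨t, hts, rfl⟩ :=
    (Nat.dvd_prime_pow hp).mp ((dvd_pow_self k (by omega)).trans ⟨e, he⟩)
  have ht : t ≠ 0 := by rintro rfl; simp at hk
  have hs : s ≠ 0 := by rintro rfl; simp at hts; omega
  -- `p` cannot divide `e`, since otherwise it would divide `a + p ^ s`, hence `a`
  have hpe : ¬ p ∣ e := by
    intro hpe
    have hpc : p ∣ (a + p ^ s) ^ (y + v + 1) :=
      h2 ▸ dvd_add (dvd_mul_of_dvd_right (dvd_pow (dvd_pow_self p ht) (by omega)) _) hpe
    exact hpa ((Nat.dvd_add_left (dvd_pow_self p hs)).mp (hp.dvd_of_dvd_pow hpc))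
  have he1 : e = 1 :=
    ((hp.coprime_iff_not_dvd.mpr hpe).symm.pow_right (s * y)).eq_one_of_dvd
      (Dvd.intro_left _ he.symm)
  exact ⟨t * (u + 1), by rw [← h2, he1, pow_mul]⟩

theorem dvd_pow_sub_one_of_dvd_add_pow_sub_one {a d q z : ℕ} (ha : 0 < a) (hd : d ∣ q)
    (h : d ∣ (a + q) ^ z - 1) : d ∣ a ^ z - 1 := by
  have hq : a + q ≡ a [MOD d] := (Nat.modEq_iff_dvd' (by omega)).mpr (by simpa using hd) |>.symm
  have h1 : 1 ≡ (a + q) ^ z [MOD d] := (Nat.modEq_iff_dvd' (Nat.one_le_pow _ _ (by omega))).mpr h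
  exact (Nat.modEq_iff_dvd' (Nat.one_le_pow _ _ ha)).mp (h1.trans (hq.pow z))

theorem padicValNat_two_lt {z : ℕ} (hz : z ≠ 0) : padicValNat 2 z < z :=
  Nat.lt_two_pow_self.trans_le (Nat.le_of_dvd (Nat.pos_of_ne_zero hz) pow_padicValNat_dvd)

theorem dvd_of_two_mul_mul_eq {w v n P : ℕ} (h : 2 * w * v = 2 ^ (n + 1) * P) (hv : 2 ^ n ∣ v) :
    w ∣ P := by
  obtain ⟨j, rfl⟩ := hv
  exact Dvd.intro_left j (mul_left_cancel₀ (pow_ne_zero (n + 1) two_ne_zero) (by rw [← h]; ring))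

theorem two_pow_mul_lt_of_mul_eq_two_pow_sub_one {q h E n N : ℕ} (hqh : q * h = 2 ^ N - 1)
    (hN : N ≠ 0) (hE : 2 ≤ E) (hn : n ≤ N) (hdvd : 2 ^ n ∣ q + E) : 2 ^ n * q < E * 2 ^ N := by
  have hN1 : 2 ≤ 2 ^ N := Nat.one_lt_two_pow hN
  have hh : h ≠ 0 := by rintro rfl; omega
  have hq : q ≠ 0 := by rintro rfl; omega
  have hEh : 2 ≤ E * h := le_mul_of_le_of_one_le hE (Nat.one_le_iff_ne_zero.mpr hh)
  -- modulo `2 ^ n` we have `q ≡ -E` and `q * h ≡ -1`, so `E * h ≡ 1`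
  have hdvd' : 2 ^ n ∣ 2 ^ N + (E * h - 1) := by
    have := hdvd.mul_right h
    rwa [add_mul, hqh, show 2 ^ N - 1 + E * h = 2 ^ N + (E * h - 1) by omega] at this
  have hlt : 2 ^ n < E * h :=
    Nat.lt_of_le_sub_one (by omega)
      (Nat.le_of_dvd (by omega) ((Nat.dvd_add_right (pow_dvd_pow 2 hn)).mp hdvd'))
  calc 2 ^ n * q < E * h * q := Nat.mul_lt_mul_of_pos_right hlt (Nat.pos_of_ne_zero hq)
    _ = E * (2 ^ N - 1) := by rw [← hqh]; ring
    _ ≤ E * 2 ^ N := Nat.mul_le_mul_left E (Nat.sub_le _ _)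

section

variable {r q P x z : ℕ}

theorem two_pow_dvd_sub_one_or_add_one_of_add_pow_eq (hr : r ≠ 0) (hq : Odd q) (hz : z ≠ 0)
    (h : (2 ^ r + q) ^ z = 2 ^ (r * x) * P + 1) :
    2 ^ (r * x - padicValNat 2 z) ∣ 2 ^ r + q - 1 ∨
      2 ^ (r * x - padicValNat 2 z) ∣ 2 ^ r + q + 1 :=
  two_pow_dvd_sub_one_or_add_one_of_dvd_pow_sub_one ((Nat.even_pow.mpr ⟨even_two, hr⟩).add_odd hq)
    hz (by rw [h, Nat.add_sub_cancel]; exact dvd_mul_right _ _)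

theorem two_pow_le_add_add_one_of_add_pow_eq (hr : r ≠ 0) (hq : Odd q) (hz : z ≠ 0)
    (h : (2 ^ r + q) ^ z = 2 ^ (r * x) * P + 1) :
    2 ^ (r * x - padicValNat 2 z) ≤ 2 ^ r + q + 1 := by
  rcases two_pow_dvd_sub_one_or_add_one_of_add_pow_eq hr hq hz h with h' | h'
  · have := Nat.le_of_dvd (by have := hq.pos; have := Nat.one_le_two_pow (n := r); omega) h'
    omega
  · exact Nat.le_of_dvd (by positivity) h'

theorem exists_two_pow_dvd_add_of_add_pow_eq (hr : r ≠ 0) (hq : Odd q) (hz : z ≠ 0)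
    (h : (2 ^ r + q) ^ z = 2 ^ (r * x) * P + 1) :
    ∃ E, (E = 2 ^ r - 1 ∨ E = 2 ^ r + 1) ∧ 2 ^ (r * x - padicValNat 2 z) ∣ q + E := by
  have := Nat.one_le_two_pow (n := r)
  rcases two_pow_dvd_sub_one_or_add_one_of_add_pow_eq hr hq hz h with h' | h'
  · exact ⟨2 ^ r - 1, .inl rfl, by rwa [show q + (2 ^ r - 1) = 2 ^ r + q - 1 by omega]⟩
  · exact ⟨2 ^ r + 1, .inr rfl, by rwa [show q + (2 ^ r + 1) = 2 ^ r + q + 1 by ring]⟩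

theorem add_pow_ne_of_le_of_three_le (hr : 2 ≤ r) (hq : Odd q) (hz : 3 ≤ z) (hzx : z < x)
    (hPq : P ≤ q) : (2 ^ r + q) ^ z ≠ 2 ^ (r * x) * P + 1 := by
  intro h
  set c := 2 ^ r + q
  set m := padicValNat 2 z
  have hm : m < z := padicValNat_two_lt (by omega)
  have hrx : 2 * x ≤ r * x := Nat.mul_le_mul_right x hr
  have hc : 2 ^ (r * x - m - 1) ≤ c := by
    have := two_pow_le_add_add_one_of_add_pow_eq (by omega) hq (by omega) h
    rw [show r * x - m = r * x - m - 1 + 1 by omega, pow_succ] at this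
    have := Nat.one_le_two_pow (n := r * x - m - 1)
    omega
  have hlow : 2 ^ (r * x) ≤ c ^ 2 := calc
    2 ^ (r * x) ≤ 2 ^ ((r * x - m - 1) * 2) := Nat.pow_le_pow_right two_pos (by omega)
    _ = (2 ^ (r * x - m - 1)) ^ 2 := pow_mul _ _ _
    _ ≤ c ^ 2 := Nat.pow_le_pow_left hc 2
  have hup : c ^ z < 2 ^ (r * x) * c := calc
    c ^ z = 2 ^ (r * x) * P + 1 := h
    _ ≤ 2 ^ (r * x) * q + 1 := by gcongr
    _ < 2 ^ (r * x) * c := by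
      have := Nat.mul_le_mul_left (2 ^ (r * x)) (Nat.one_lt_two_pow (n := r) (by omega))
      have := Nat.one_le_two_pow (n := r * x)
      simp only [c, mul_add]; omega
  have : c ^ 2 * c ≤ c ^ z := by
    rw [← pow_succ]; exact Nat.pow_le_pow_right (by positivity) (by omega)
  nlinarith

theorem add_sq_ne_of_dvd (hr : 2 ≤ r) (hq : Odd q) (hx : 2 < x) (hPq : P ∣ q) :
    (2 ^ r + q) ^ 2 ≠ 2 ^ (r * x) * P + 1 := by
  intro h
  have hdvd := two_pow_dvd_sub_one_or_add_one_of_add_pow_eq (by omega) hq two_ne_zero h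
  rw [padicValNat_self] at hdvd
  have hc : Odd (2 ^ r + q) := (Nat.even_pow.mpr ⟨even_two, by omega⟩).add_odd hq
  set c := 2 ^ r + q
  have hr2 : 2 ^ 2 ≤ 2 ^ r := Nat.pow_le_pow_right two_pos hr
  have hq1 := hq.pos
  have hrx : r * x - 1 + 1 = r * x := by have := Nat.mul_le_mul_left r hx; omega
  have hprod : (c + 1) * (c - 1) = 2 ^ (r * x - 1 + 1) * P := by
    rw [hrx, ← Nat.sq_sub_sq, h]; simp
  -- the factor `c ± 1` not divisible by `2 ^ (r * x - 1)` is twice a divisor of `P`, hence of `q`,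
  -- hence of `2 ^ r ± 1`
  have hbound : 2 ^ (r * x - 1) ≤ 2 ^ (r + 1) + 2 := by
    rw [pow_succ]
    rcases hdvd with hdvd | hdvd
    · obtain ⟨w, hw⟩ := even_iff_two_dvd.mp hc.add_one
      have hwP := dvd_of_two_mul_mul_eq (hw ▸ hprod) hdvd
      have := Nat.le_of_dvd (by positivity)
        ((Nat.dvd_add_right (hwP.trans hPq)).mp (show w ∣ q + (2 ^ r + 1) from
          ⟨2, by simp only [c] at hw; omega⟩))
      have := Nat.le_of_dvd (by omega) hdvd
      omega
    · obtain ⟨w, hw⟩ := even_iff_two_dvd.mp (hc.tsub_odd odd_one)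
      have hwP := dvd_of_two_mul_mul_eq (hw ▸ (mul_comm (c + 1) _).symm.trans hprod) hdvd
      have := Nat.le_of_dvd (by omega)
        ((Nat.dvd_add_right (hwP.trans hPq)).mp (show w ∣ q + (2 ^ r - 1) from
          ⟨2, by simp only [c] at hw; omega⟩))
      have := Nat.le_of_dvd (by omega) hdvd
      omega
  have : 2 ^ (r + 3) ≤ 2 ^ (r * x - 1) := by
    have := Nat.mul_le_mul_left r hx; exact Nat.pow_le_pow_right two_pos (by omega)
  rw [pow_add] at this
  omega

theorem add_pow_ne_of_dvd (hr : 2 ≤ r) (hq : Odd q) (hz : 2 ≤ z) (hzx : z < x) (hqP : q ∣ P) :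
    (2 ^ r + q) ^ z ≠ 2 ^ (r * x) * P + 1 := by
  intro h
  obtain ⟨E, hE, hdvd⟩ := exists_two_pow_dvd_add_of_add_pow_eq (by omega) hq (by omega) h
  set m := padicValNat 2 z
  set n := r * x - m with hn_def
  have hm : m < z := padicValNat_two_lt (by omega)
  have hrz : 2 * z ≤ r * z := Nat.mul_le_mul_right z hr
  have hrz' : r * 2 ≤ r * z := Nat.mul_le_mul_left r hz
  have hrx : r * z + r ≤ r * x := by rw [← Nat.mul_succ]; exact Nat.mul_le_mul_left r hzx
  have hr2 : 2 ^ 2 ≤ 2 ^ r := Nat.pow_le_pow_right two_pos hr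
  have hq1 := hq.pos
  obtain ⟨h', hh'⟩ : q ∣ 2 ^ (r * z) - 1 := by
    rw [pow_mul]
    refine dvd_pow_sub_one_of_dvd_add_pow_sub_one (by positivity) dvd_rfl ?_
    rw [h, Nat.add_sub_cancel]; exact hqP.mul_left _
  have hrz1 : 2 ≤ 2 ^ (r * z) := Nat.one_lt_two_pow (by omega)
  have hqle : q ≤ 2 ^ (r * z) - 1 := Nat.le_of_dvd (by omega) ⟨h', hh'⟩
  have hE : 3 ≤ E ∧ E < 2 ^ (r + 1) := by rw [pow_succ]; omega
  have hn : n ≤ r * z := by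
    have hlt : 2 ^ n < 2 ^ (r * z + 1) := by
      have := Nat.le_of_dvd (by omega) hdvd
      have := Nat.pow_lt_pow_right (a := 2) one_lt_two (show r < r * z by omega)
      rw [pow_succ]; omega
    exact Nat.lt_succ_iff.mp ((Nat.pow_lt_pow_iff_right one_lt_two).mp hlt)
  have hkey := two_pow_mul_lt_of_mul_eq_two_pow_sub_one hh'.symm (by omega) (by omega) hn hdvd
  have hqlow : 2 ^ (n - 1) ≤ q := by
    have := Nat.le_of_dvd (by omega) hdvd
    have : 2 ^ (r + 1) ≤ 2 ^ (n - 1) := Nat.pow_le_pow_right two_pos (by omega)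
    have : 2 ^ n = 2 ^ (n - 1) * 2 := by rw [← pow_succ, Nat.sub_add_cancel (by omega)]
    omega
  have : 2 ^ (n - 1 + n) < 2 ^ (r + 1 + r * z) := calc
    2 ^ (n - 1 + n) = 2 ^ (n - 1) * 2 ^ n := pow_add _ _ _
    _ ≤ 2 ^ n * q := by rw [mul_comm]; exact Nat.mul_le_mul_left _ hqlow
    _ < E * 2 ^ (r * z) := hkey
    _ < 2 ^ (r + 1) * 2 ^ (r * z) := Nat.mul_lt_mul_of_pos_right hE.2 (by positivity)
    _ = 2 ^ (r + 1 + r * z) := (pow_add _ _ _).symm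
  have := (Nat.pow_lt_pow_iff_right one_lt_two).mp this
  omega

end

theorem stmt_17_general (k p r s : ℕ) (hk : 1 < k) (hp : p.Prime) (hpodd : Odd p)
    (hr : 1 < r) :
    ¬ ∃ x y z : ℕ, 0 < x ∧ 0 < y ∧ 0 < z ∧ x > z ∧ z > y ∧
      (2 ^ r * k) ^ x + (p ^ s * k) ^ y = ((2 ^ r + p ^ s) * k) ^ z := by
  rintro ⟨x, y, z, -, hy, -, hzx, hyz, h⟩
  have hp2 : ¬ p ∣ 2 ^ r := hp.coprime_iff_not_dvd.mp (hpodd.coprime_two_right.pow_right r)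
  obtain ⟨W, hW⟩ := exists_pow_eq_mul_prime_pow_add_one hp hp2 hk hyz hzx h
  rw [← pow_mul] at hW
  have hq : Odd (p ^ s) := hpodd.pow
  rcases le_total W s with hWs | hsW
  · have hPq : p ^ W ∣ p ^ s := pow_dvd_pow p hWs
    obtain rfl | hz : z = 2 ∨ 3 ≤ z := by omega
    · exact add_sq_ne_of_dvd hr hq hzx hPq hW
    · exact add_pow_ne_of_le_of_three_le hr hq hz hzx (Nat.le_of_dvd hq.pos hPq) hW
  · exact add_pow_ne_of_dvd hr hq (by omega) hzx (pow_dvd_pow p hsW) hW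

theorem stmt_17 (k p r s : ℕ) (hk : 1 < k) (hp : p.Prime) (hpodd : Odd p)
    (hr : 1 < r) (hs : 0 < s) (hcop : Nat.Coprime (2 ^ r) (p ^ s)) :
    ¬ ∃ x y z : ℕ, 0 < x ∧ 0 < y ∧ 0 < z ∧ x > z ∧ z > y ∧
      (2 ^ r * k) ^ x + (p ^ s * k) ^ y = ((2 ^ r + p ^ s) * k) ^ z :=
  stmt_17_general k p r s hk hp hpodd hr
end

section
/- Let k > 1 be a positive integer, p an odd prime, and r, s positive integers with s > 1. Then the equation (p^r·k)^x + (2^s·k)^y = ((p^r + 2^s)·k)^z has no positive integer solutions (x, y, z) with x > z > y. -/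
/-!
Cancelling `k ^ y` shows `k ∣ 2 ^ (s * y)`, so `k = 2 ^ t`. Since `N = p ^ r + 2 ^ s` is odd,
comparing the powers of `2` on both sides gives `s * y = t * (z - y)` and
`N ^ z - 1 = p ^ (r * x) * 2 ^ (t * (x - z))`, so no divisor of `N ^ z - 1` has a prime factor
other than `2` and `p`. Write `z = q * w` with `q` prime, odd unless `z` is a power of `2`.
If `p ∤ N ^ w - 1`, then `N ^ w - 1` is a power of `2`, which forces `w = 1`. If `p ∣ N ^ w - 1`,
then for odd `q` the odd divisor `∑ i < q, N ^ (w * i)` would be a power of `p`, which lifting the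
exponent rules out; for `q = 2`, `N ^ w + 1` is a power of `2`, impossible when `N ^ w` is a square
and leading to `p ^ a + 1 = 2 ^ c` with `a ≥ 2` when `w = 1`. Hence `z` is prime and
`N = 2 ^ e + 1`. Then `p ^ r > 2 ^ s`, and comparing sizes gives `s + t < z`, while the prime `z`
divides `(s + t) * y` with `0 < y < z`.
-/

open Finset

namespace Nat

theorem eq_of_two_pow_mul_odd_eq {i j u v : ℕ} (hu : Odd u) (hv : Odd v)
    (h : 2 ^ i * u = 2 ^ j * v) : i = j ∧ u = v := by
  have hval : ∀ {i u : ℕ}, Odd u → padicValNat 2 (2 ^ i * u) = i := fun {i u} hu => by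
    rw [padicValNat.mul (by positivity) hu.pos.ne', padicValNat.prime_pow,
      padicValNat.eq_zero_of_not_dvd hu.not_two_dvd_nat, add_zero]
  obtain rfl : i = j := by rw [← hval (i := i) hu, h, hval hv]
  exact ⟨rfl, Nat.eq_of_mul_eq_mul_left (by positivity) h⟩

theorem exists_eq_pow_of_dvd_pow_mul_pow {p q a b D : ℕ} (hp : p.Prime) (hq : q.Prime)
    (hD : D ∣ p ^ a * q ^ b) (hqD : ¬ q ∣ D) : ∃ c, D = p ^ c := by
  have hcop : D.Coprime (q ^ b) := ((hq.coprime_iff_not_dvd).mpr hqD).symm.pow_right b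
  obtain ⟨c, -, rfl⟩ := (Nat.dvd_prime_pow hp).mp (hcop.dvd_of_dvd_mul_right hD)
  exact ⟨c, rfl⟩

theorem geom_sum_dvd_pow_sub_one (B q : ℕ) : ∑ i ∈ range q, B ^ i ∣ B ^ q - 1 := by
  rcases B with _ | B
  · rcases q with _ | q <;> simp
  · exact Dvd.intro _ (by rw [← geom_sum_mul_add B q, Nat.add_sub_cancel])

theorem odd_geom_sum_s18 {B q : ℕ} (hB : Odd B) (hq : Odd q) : Odd (∑ i ∈ range q, B ^ i) := by
  simpa [Finset.odd_sum_iff_odd_card_odd, hB.pow] using hq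

theorem lt_geom_sum_s18 {B q : ℕ} (hB : 2 ≤ B) (hq : 2 ≤ q) : q < ∑ i ∈ range q, B ^ i :=
  calc q = ∑ _i ∈ range q, 1 := by simp
    _ < ∑ i ∈ range q, B ^ i :=
      sum_lt_sum (fun i _ => Nat.one_le_pow _ _ (by omega))
        ⟨1, mem_range.mpr (by omega), by rw [pow_one]; omega⟩

theorem geom_sum_ne_prime_pow {p B q c : ℕ} (hp : p.Prime) (hp2 : Odd p) (hpB : p ∣ B - 1)
    (hB : 2 ≤ B) (hq : 2 ≤ q) : ∑ i ∈ range q, B ^ i ≠ p ^ c := by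
  intro h
  have := Fact.mk hp
  obtain ⟨B, rfl⟩ : ∃ B', B = B' + 1 := ⟨B - 1, by omega⟩
  rw [Nat.add_sub_cancel] at hpB
  have hpB1 : ¬ p ∣ B + 1 := fun h' =>
    hp.one_lt.ne' (Nat.dvd_one.mp ((Nat.dvd_add_right hpB).mp h'))
  -- lifting the exponent: `v_p (∑ i < q, (B + 1) ^ i) = v_p q`
  have hlte := padicValNat.pow_sub_pow (x := B + 1) (y := 1) hp2 (by omega) (by simpa using hpB)
    hpB1 (n := q) (by omega)
  rw [one_pow, ← geom_sum_mul_add B q, Nat.add_sub_cancel, Nat.add_sub_cancel,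
    padicValNat.mul (h ▸ (pow_pos hp.pos c).ne') (by omega), h, padicValNat.prime_pow] at hlte
  have hcq : p ^ c ∣ q := by
    rw [show c = padicValNat p q by omega]
    exact pow_padicValNat_dvd
  have := Nat.le_of_dvd (by omega) hcq
  have := lt_geom_sum_s18 (B := B + 1) (by omega) hq
  omega

theorem sq_add_one_ne_two_pow {C e : ℕ} (hC : 2 ≤ C) : C ^ 2 + 1 ≠ 2 ^ e := by
  intro h
  have he : 2 ≤ e := by
    by_contra! he
    interval_cases e <;> nlinarith
  have h4 : 4 ∣ C ^ 2 + 1 := h ▸ (pow_dvd_pow 2 he : 2 ^ 2 ∣ 2 ^ e)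
  rcases Nat.even_or_odd C with ⟨k, rfl⟩ | ⟨k, rfl⟩ <;> ring_nf at h4 <;> omega

theorem pow_add_one_ne_two_pow {x n e : ℕ} (hx : Odd x) (hx1 : 1 < x) (hn : 2 ≤ n) :
    x ^ n + 1 ≠ 2 ^ e := by
  intro h
  rcases Nat.even_or_odd n with ⟨u, rfl⟩ | hn_odd
  · refine sq_add_one_ne_two_pow (C := x ^ u) (e := e)
      (hx1.trans_le (Nat.le_self_pow (by omega) x)) ?_
    rw [← h, ← pow_mul, mul_two]
  · -- for odd `n`, lifting the exponent at `2` gives `v_2 (x ^ n + 1) = v_2 (x + 1)`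
    have hlte := emultiplicity_pow_sub_pow_of_prime Int.prime_two (x := (x : ℤ)) (y := -1)
      (by simpa using (Int.natCast_dvd_natCast.mpr hx.add_one.two_dvd))
      (by exact_mod_cast hx.not_two_dvd_nat) (n := n) (by exact_mod_cast hn_odd.not_two_dvd_nat)
    have h' : (x : ℤ) ^ n - (-1) ^ n = 2 ^ e := by
      rw [hn_odd.neg_one_pow, sub_neg_eq_add]
      exact_mod_cast h
    rw [h', emultiplicity_pow_self_of_prime Int.prime_two] at hlte
    have hdvd : (2 : ℤ) ^ e ∣ x - -1 := pow_dvd_of_le_emultiplicity hlte.le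
    have := Int.le_of_dvd (by omega) hdvd
    have hxn : (x : ℤ) < (x : ℤ) ^ n := by
      exact_mod_cast (pow_one x).symm.trans_lt (Nat.pow_lt_pow_right hx1 (show 1 < n by omega))
    linarith

theorem pow_sub_one_ne_two_pow {N w e : ℕ} (hN : 4 ≤ N) (hw : 2 ≤ w) : N ^ w - 1 ≠ 2 ^ e := by
  intro h
  have hdvd : ∀ D, D ∣ N ^ w - 1 → ∃ i, D = 2 ^ i := fun D hD => by
    obtain ⟨i, -, rfl⟩ := (Nat.dvd_prime_pow Nat.prime_two).mp (h ▸ hD)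
    exact ⟨i, rfl⟩
  obtain ⟨g, hg⟩ := hdvd (N - 1) (by simpa using Nat.sub_dvd_pow_sub_pow N 1 w)
  have hg2 : 2 ≤ g := by
    by_contra! hg2
    interval_cases g <;> omega
  rcases Nat.even_or_odd w with ⟨u, rfl⟩ | hw_odd
  · have hsq : N + 1 ∣ N ^ 2 - 1 := Dvd.intro _ (by simpa using (Nat.sq_sub_sq N 1).symm)
    obtain ⟨g', hg'⟩ := hdvd (N + 1)
      (hsq.trans (by rw [← two_mul, pow_mul]; simpa using Nat.sub_dvd_pow_sub_pow (N ^ 2) 1 u))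
    have hg'2 : 2 ≤ g' := by
      by_contra! hg'2
      interval_cases g' <;> omega
    have h1 : 4 ∣ 2 ^ g := pow_dvd_pow 2 hg2
    have h2 : 4 ∣ 2 ^ g' := pow_dvd_pow 2 hg'2
    omega
  · have hN_odd : Odd N := by
      rw [show N = 2 ^ g + 1 by omega]
      exact (Nat.even_pow.mpr ⟨even_two, by omega⟩).add_one
    obtain ⟨i, hi⟩ := hdvd _ (geom_sum_dvd_pow_sub_one N w)
    have hodd := odd_geom_sum_s18 hN_odd hw_odd
    obtain rfl : i = 0 := by
      by_contra hi0
      exact (Nat.not_even_iff_odd.mpr hodd) (hi ▸ Nat.even_pow.mpr ⟨even_two, hi0⟩)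
    have := lt_geom_sum_s18 (by omega : 2 ≤ N) hw
    omega

theorem sq_sub_one_ne_of_add_one_eq_two_pow {p N a b c : ℕ} (hp : Odd p) (hp1 : 1 < p)
    (ha : 2 ≤ a) (hN : 3 ≤ N) (hc : N + 1 = 2 ^ c) : N ^ 2 - 1 ≠ p ^ a * 2 ^ b := by
  intro h
  have hc2 : 2 ≤ c := by
    by_contra! hc2
    interval_cases c <;> omega
  have hc' : 2 ^ c = 2 * 2 ^ (c - 1) := by
    rw [← pow_succ']
    congr 1
    omega
  have hM : Odd (2 ^ (c - 1) - 1) :=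
    Nat.Even.sub_odd Nat.one_le_two_pow (Nat.even_pow.mpr ⟨even_two, by omega⟩) odd_one
  have hfac : 2 ^ (c + 1) * (2 ^ (c - 1) - 1) = 2 ^ b * p ^ a := by
    have hN1 : N - 1 = 2 * (2 ^ (c - 1) - 1) := by omega
    rw [mul_comm (2 ^ b), ← h, show N ^ 2 - 1 = (N + 1) * (N - 1) by simpa using Nat.sq_sub_sq N 1,
      hc, hN1, pow_succ]
    ring
  obtain ⟨-, hpa⟩ := eq_of_two_pow_mul_odd_eq hM hp.pow hfac
  exact pow_add_one_ne_two_pow hp hp1 ha (e := c - 1) (by omega)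

theorem exists_prime_mul_eq_of_two_le {z : ℕ} (hz : 2 ≤ z) :
    ∃ q w, q.Prime ∧ z = q * w ∧ (q = 2 → ∃ f, w = 2 ^ f) := by
  by_cases h : ∃ q, q.Prime ∧ q ∣ z ∧ q ≠ 2
  · obtain ⟨q, hq, ⟨w, rfl⟩, hq2⟩ := h
    exact ⟨q, w, hq, rfl, fun h => absurd h hq2⟩
  · push Not at h
    obtain ⟨f, hf⟩ : ∃ f, z = 2 ^ f :=
      ⟨_, Nat.eq_prime_pow_of_unique_prime_dvd (by omega) fun hd hdz => h _ hd hdz⟩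
    have hf0 : f ≠ 0 := by
      rintro rfl
      rw [pow_zero] at hf
      omega
    refine ⟨2, 2 ^ (f - 1), Nat.prime_two, ?_, fun _ => ⟨_, rfl⟩⟩
    rw [hf, ← pow_succ']
    congr 1
    omega

theorem prime_and_sub_one_eq_two_pow_of_pow_sub_one_eq {p N z a b : ℕ} (hp : p.Prime)
    (hp2 : Odd p) (hN : Odd N) (hN5 : 5 ≤ N) (hz : 2 ≤ z) (ha : 2 ≤ a)
    (h : N ^ z - 1 = p ^ a * 2 ^ b) : z.Prime ∧ ∃ e, N - 1 = 2 ^ e := by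
  have hpow_p : ∀ D, D ∣ N ^ z - 1 → Odd D → ∃ c, D = p ^ c := fun D hD hD2 =>
    exists_eq_pow_of_dvd_pow_mul_pow hp Nat.prime_two (h ▸ hD) hD2.not_two_dvd_nat
  have hpow_two : ∀ D, D ∣ N ^ z - 1 → ¬ p ∣ D → ∃ c, D = 2 ^ c := fun D hD hpD =>
    exists_eq_pow_of_dvd_pow_mul_pow Nat.prime_two hp (mul_comm (p ^ a) _ ▸ h ▸ hD) hpD
  obtain ⟨q, w, hq, rfl, hq2⟩ := exists_prime_mul_eq_of_two_le hz
  have hw : w ≠ 0 := by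
    rintro rfl
    simp at hz
  have hB : 5 ≤ N ^ w := hN5.trans (Nat.le_self_pow hw N)
  have hBq : N ^ (q * w) = (N ^ w) ^ q := by rw [mul_comm, pow_mul]
  by_cases hpB : p ∣ N ^ w - 1
  · exfalso
    rcases hq.eq_two_or_odd' with rfl | hq_odd
    · obtain ⟨f, rfl⟩ := hq2 rfl
      have hpB' : ¬ p ∣ N ^ 2 ^ f + 1 := fun h' => by
        have h2 := Nat.dvd_sub h' hpB
        rw [show N ^ 2 ^ f + 1 - (N ^ 2 ^ f - 1) = 2 by omega] at h2
        exact Nat.not_even_iff_odd.mpr hp2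
          ((Nat.prime_dvd_prime_iff_eq hp Nat.prime_two).mp h2 ▸ even_two)
      have hsq : N ^ 2 ^ f + 1 ∣ N ^ (2 * 2 ^ f) - 1 :=
        Dvd.intro _ (by rw [hBq]; simpa using (Nat.sq_sub_sq (N ^ 2 ^ f) 1).symm)
      obtain ⟨c, hc⟩ := hpow_two _ hsq hpB'
      rcases f with _ | f
      · exact sq_sub_one_ne_of_add_one_eq_two_pow (N := N) hp2 hp.one_lt ha (by omega)
          (by simpa using hc) (by simpa using h)
      · refine sq_add_one_ne_two_pow (C := N ^ 2 ^ f) (e := c)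
          (by have := Nat.le_self_pow (pow_ne_zero f two_ne_zero) N; omega) ?_
        rw [← pow_mul, ← pow_succ, hc]
    · obtain ⟨c, hc⟩ :=
        hpow_p _ (hBq ▸ geom_sum_dvd_pow_sub_one _ q) (odd_geom_sum_s18 hN.pow hq_odd)
      exact geom_sum_ne_prime_pow hp hp2 hpB (by omega) hq.two_le hc
  · obtain ⟨e, he⟩ :=
      hpow_two (N ^ w - 1) (hBq ▸ by simpa using Nat.sub_dvd_pow_sub_pow (N ^ w) 1 q) hpB
    obtain rfl : w = 1 := by
      by_contra hw1
      exact pow_sub_one_ne_two_pow (by omega) (by omega) he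
    exact ⟨by simpa using hq, e, by simpa using he⟩

theorem cancel_pow_of_mul_pow_add_mul_pow_eq {P Q N k y m d : ℕ} (hk : 0 < k)
    (h : (P * k) ^ (y + m + d) + (Q * k) ^ y = (N * k) ^ (y + m)) :
    P ^ (y + m + d) * k ^ (m + d) + Q ^ y = N ^ (y + m) * k ^ m := by
  apply Nat.eq_of_mul_eq_mul_left (pow_pos hk y)
  calc k ^ y * (P ^ (y + m + d) * k ^ (m + d) + Q ^ y)
      = (P * k) ^ (y + m + d) + (Q * k) ^ y := by ring
    _ = (N * k) ^ (y + m) := h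
    _ = k ^ y * (N ^ (y + m) * k ^ m) := by ring

theorem eq_and_add_one_eq_of_two_pow_mul_add_two_pow {i j A M : ℕ} (hA : Even A) (hM : Odd M)
    (h : 2 ^ i * A + 2 ^ j = 2 ^ i * M) : j = i ∧ A + 1 = M := by
  have hAM : A < M :=
    Nat.lt_of_mul_lt_mul_left (a := 2 ^ i) (by have := Nat.two_pow_pos j; omega)
  have h' : 2 ^ j * 1 = 2 ^ i * (M - A) := by
    rw [Nat.mul_sub]
    omega
  obtain ⟨hji, h1⟩ := eq_of_two_pow_mul_odd_eq odd_one (Nat.Odd.sub_even hAM.le hM hA) h'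
  exact ⟨hji, by omega⟩

theorem add_lt_of_pow_succ_mul_two_pow_lt {P s t e z : ℕ} (hP : 2 ≤ P)
    (he : P + 2 ^ s = 2 ^ e + 1) (h : P ^ (z + 1) * 2 ^ t < (P + 2 ^ s) ^ z) : s + t < z := by
  have hse : s < e := (Nat.pow_lt_pow_iff_right one_lt_two).mp (by omega)
  have hs : 2 * 2 ^ s ≤ 2 ^ e := by
    rw [← pow_succ']
    exact Nat.pow_le_pow_right two_pos hse
  have hPz : P ^ z * (P * 2 ^ t) < P ^ z * 2 ^ z :=
    calc P ^ z * (P * 2 ^ t) = P ^ (z + 1) * 2 ^ t := by ring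
      _ < (P + 2 ^ s) ^ z := h
      _ ≤ (2 * P) ^ z := Nat.pow_le_pow_left (by omega) z
      _ = P ^ z * 2 ^ z := by ring
  have hPt := Nat.lt_of_mul_lt_mul_left hPz
  have : 2 ^ (s + t) < 2 ^ z := by
    rw [pow_add]
    exact (Nat.mul_lt_mul_of_pos_right (by omega) (by positivity)).trans hPt
  exact (Nat.pow_lt_pow_iff_right one_lt_two).mp this

end Nat

theorem stmt_18 (k p r s : ℕ) (hk : 1 < k) (hp : p.Prime) (hpodd : Odd p)
    (hr : 0 < r) (hs : 1 < s) :
    ¬ ∃ x y z : ℕ, 0 < x ∧ 0 < y ∧ 0 < z ∧ x > z ∧ z > y ∧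
      (p ^ r * k) ^ x + (2 ^ s * k) ^ y = ((p ^ r + 2 ^ s) * k) ^ z := by
  rintro ⟨x, y, z, -, hy, -, hxz, hzy, h⟩
  obtain ⟨m, rfl⟩ : ∃ m, z = y + m := ⟨z - y, by omega⟩
  obtain ⟨d, rfl⟩ : ∃ d, x = y + m + d := ⟨x - (y + m), by omega⟩
  have hp3 : 3 ≤ p := by
    have := hp.two_le
    rcases hpodd with ⟨j, rfl⟩
    omega
  have hP3 : 3 ≤ p ^ r := hp3.trans (Nat.le_self_pow hr.ne' p)
  have h4 : 4 ≤ 2 ^ s := by simpa using Nat.pow_le_pow_right two_pos hs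
  have hN : Odd (p ^ r + 2 ^ s) := hpodd.pow.add_even (Nat.even_pow.mpr ⟨even_two, by omega⟩)
  set P := p ^ r
  set N := P + 2 ^ s
  have h1 := Nat.cancel_pow_of_mul_pow_add_mul_pow_eq (by omega) h
  obtain ⟨t, -, rfl⟩ : ∃ t ≤ s * y, k = 2 ^ t := by
    have hk : k ∣ (2 ^ s) ^ y :=
      (Nat.dvd_add_right (dvd_mul_of_dvd_right (dvd_pow_self k (by omega)) _)).mp
        (h1 ▸ dvd_mul_of_dvd_right (dvd_pow_self k (by omega)) _)
    rwa [← pow_mul, Nat.dvd_prime_pow Nat.prime_two] at hk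
  have ht : 0 < t := Nat.pos_of_ne_zero (by rintro rfl; simp at hk)
  obtain ⟨hsy, hkey⟩ := Nat.eq_and_add_one_eq_of_two_pow_mul_add_two_pow
    (A := P ^ (y + m + d) * 2 ^ (t * d)) (M := N ^ (y + m)) (i := t * m) (j := s * y)
    (Nat.even_mul.mpr (Or.inr (Nat.even_pow.mpr ⟨even_two, (Nat.mul_pos ht (by omega)).ne'⟩)))
    hN.pow
    (calc _ = P ^ (y + m + d) * (2 ^ t) ^ (m + d) + (2 ^ s) ^ y := by ring
      _ = _ := h1
      _ = _ := by ring)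
  obtain ⟨hz, e, he⟩ := Nat.prime_and_sub_one_eq_two_pow_of_pow_sub_one_eq hp hpodd hN
    (by omega) (by omega : 2 ≤ y + m) (a := r * (y + m + d)) (b := t * d) (by nlinarith)
    (by rw [pow_mul, ← hkey, Nat.add_sub_cancel])
  have hst := Nat.add_lt_of_pow_succ_mul_two_pow_lt (P := P) (s := s) (t := t) (e := e)
    (by omega) (by omega) <|
    calc P ^ (y + m + 1) * 2 ^ t ≤ P ^ (y + m + d) * 2 ^ (t * d) := by gcongr <;> nlinarith
      _ < N ^ (y + m) := by omega
  have hdvd : y + m ∣ (s + t) * y := ⟨t, by rw [add_mul, hsy]; ring⟩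
  rcases hz.dvd_mul.mp hdvd with h | h <;> have := Nat.le_of_dvd (by omega) h <;> omega
end

section
/- Let k > 1 be a positive integer, p and q distinct odd primes, and r, s positive integers. Then the equation (p^r·k)^x + (q^s·k)^y = ((p^r + q^s)·k)^z has no positive integer solutions (x, y, z) with x > z > y. -/
namespace Stmt19Aux

theorem two_mul_lt_three_pow (u : ℕ) (hu : 1 ≤ u) : 2*u < 3^u := by
  induction u with
  | zero => omega
  | succ n ih =>
    rcases Nat.eq_zero_or_pos n with h0 | h1
    · subst h0; norm_num
    · have h2 := ih h1
      have h3 : 0 < 3^n := pow_pos (by norm_num) n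
      have e : 3^(n+1) = 3^n * 3 := pow_succ 3 n
      omega

theorem lte_fact {p c M : ℕ} (hp : p.Prime) (hodd : Odd p) (hc : 2 ≤ c) (hdvd : p ∣ c - 1)
    (hpc : ¬ p ∣ c) (hM : M ≠ 0) :
    (c ^ M - 1).factorization p = (c - 1).factorization p + M.factorization p := by
  haveI : Fact p.Prime := ⟨hp⟩
  have h := padicValNat.pow_sub_pow (p := p) (x := c) (y := 1) hodd (by omega)
      (by simpa using hdvd) (by simpa using hpc) hM
  rw [one_pow] at h
  rw [Nat.factorization_def _ hp, Nat.factorization_def _ hp, Nat.factorization_def _ hp]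
  exact h

theorem fac_pp {p q : ℕ} (hp : p.Prime) (hq : q.Prime) (hpq : p ≠ q) (A B : ℕ) :
    (p ^ A * q ^ B).factorization p = A := by
  rw [Nat.factorization_mul (pow_ne_zero A hp.pos.ne') (pow_ne_zero B hq.pos.ne'),
    hp.factorization_pow, hq.factorization_pow]
  simp [Finsupp.single_apply, hpq, (Ne.symm hpq)]

theorem smooth {p q : ℕ} (hp : p.Prime) (hq : q.Prime) {A B d : ℕ} (h : d ∣ p ^ A * q ^ B) :
    ∃ i j, i ≤ A ∧ j ≤ B ∧ d = p ^ i * q ^ j := by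
  obtain ⟨d1, d2, h1, h2, rfl⟩ := Nat.dvd_mul.mp h
  obtain ⟨i, hi, rfl⟩ := (Nat.dvd_prime_pow hp).mp h1
  obtain ⟨j, hj, rfl⟩ := (Nat.dvd_prime_pow hq).mp h2
  exact ⟨i, j, hi, hj, rfl⟩

theorem sub_one_mul_pow_le {c z : ℕ} (hc : 1 ≤ c) (hz : 1 ≤ z) :
    (c-1) * c^(z-1) ≤ c^z - 1 := by
  have h1 : c^z = c^(z-1) * c := by rw [← pow_succ]; congr 1; omega
  have h2 : 1 ≤ c^(z-1) := Nat.one_le_pow _ _ (by omega)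
  have h3 : (c-1) * c^(z-1) = c * c^(z-1) - c^(z-1) := by rw [Nat.sub_mul, one_mul]
  have h4 : c * c^(z-1) = c^z := by rw [h1]; ring
  omega

theorem zdvd_qsub1 {q c z : ℕ} (hq : q.Prime) (hqc : ¬ q ∣ c) (hzp : z.Prime)
    (hdvd : q ∣ c^z - 1) (hq1 : ¬ q ∣ c - 1) (hc : 2 ≤ c) : z ∣ q - 1 := by
  haveI : Fact q.Prime := ⟨hq⟩
  have hc0 : (c : ZMod q) ≠ 0 := by
    rw [Ne, ZMod.natCast_eq_zero_iff]; exact hqc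
  have hcz1 : 1 ≤ c^z := Nat.one_le_pow _ _ (by omega)
  have h1 : (c : ZMod q)^z = 1 := by
    have h := (ZMod.natCast_eq_zero_iff (c^z - 1) q).mpr hdvd
    rw [Nat.cast_sub hcz1] at h
    push_cast at h
    linear_combination h
  have ho : orderOf (c : ZMod q) ∣ z := orderOf_dvd_of_pow_eq_one h1
  rcases (Nat.Prime.eq_one_or_self_of_dvd hzp _ ho) with h | h
  · exfalso
    have h0 : (c : ZMod q) = 1 := orderOf_eq_one_iff.mp h
    have h2 : ((c - 1 : ℕ) : ZMod q) = 0 := by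
      rw [Nat.cast_sub (by omega)]; push_cast; rw [h0]; ring
    exact hq1 ((ZMod.natCast_eq_zero_iff _ _).mp h2)
  · rw [← h]; exact ZMod.orderOf_dvd_card_sub_one hc0

/-- Bernoulli-type bound in ℕ. -/
theorem bern {c m : ℕ} (hm : m ≤ c) : ∀ u, c^(u+1) ≤ c*(c-m)^u + u*m*c^u := by
  intro u
  induction u with
  | zero => simp
  | succ n ih =>
    have h1 : c^(n+1+1) = c * c^(n+1) := by ring
    have h2 : c * c^(n+1) ≤ c*(c*(c-m)^n) + n*m*c^(n+1) := by
      have h := Nat.mul_le_mul_left c ih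
      rw [Nat.mul_add] at h
      have e : c * (n*m*c^n) = n*m*c^(n+1) := by ring
      rw [e] at h
      exact h
    have h3 : c * (c*(c-m)^n) ≤ c*(c-m)^(n+1) + m*c^(n+1) := by
      have e1 : c * (c * (c-m)^n) = (c*(c-m)^n)*(c-m) + (c*(c-m)^n)*m := by
        have hcm : (c-m) + m = c := by omega
        calc c * (c * (c-m)^n) = (c*(c-m)^n) * ((c-m)+m) := by rw [hcm]; ring
          _ = (c*(c-m)^n)*(c-m) + (c*(c-m)^n)*m := by ring
      have e2 : (c*(c-m)^n)*(c-m) = c*(c-m)^(n+1) := by ring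
      have e3 : (c*(c-m)^n)*m ≤ m*c^(n+1) := by
        have hle : (c-m)^n ≤ c^n := Nat.pow_le_pow_left (by omega) n
        calc (c*(c-m)^n)*m ≤ (c*c^n)*m := Nat.mul_le_mul_right m (Nat.mul_le_mul_left c hle)
          _ = m*c^(n+1) := by ring
      omega
    have h6 : (n+1)*m*c^(n+1) = m*c^(n+1) + n*m*c^(n+1) := by ring
    omega

/-- size bound: c^z ≤ 3*((c-1)*(c-m)^(z-1)) under 2*((z-1)*m) ≤ c. -/
theorem SB {c m z : ℕ} (hmc : m ≤ c) (hc3 : 3 ≤ c) (hz : 1 ≤ z)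
    (h2 : 2*((z-1)*m) ≤ c) : c^z ≤ 3*((c-1)*(c-m)^(z-1)) := by
  obtain ⟨u, rfl⟩ : ∃ u, z = u + 1 := ⟨z - 1, by omega⟩
  simp only [Nat.add_sub_cancel] at h2 ⊢
  have hb := bern hmc u
  have h3 : 2*(u*m*c^u) ≤ c * c^u := by
    have : (2*(u*m))*c^u ≤ c*c^u := Nat.mul_le_mul_right _ h2
    calc 2*(u*m*c^u) = (2*(u*m))*c^u := by ring
      _ ≤ c*c^u := this
  have h4 : c^(u+1) = c * c^u := by ring
  -- 2*c^{u+1} ≤ 2c(c-m)^u + 2umc^u ≤ 2c(c-m)^u + c^{u+1}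
  have h5 : c^(u+1) ≤ 2*(c*(c-m)^u) := by omega
  have h6 : 2*(c*(c-m)^u) ≤ 3*((c-1)*(c-m)^u) := by
    have : 2*c ≤ 3*(c-1) := by omega
    calc 2*(c*(c-m)^u) = (2*c)*(c-m)^u := by ring
      _ ≤ (3*(c-1))*(c-m)^u := Nat.mul_le_mul_right _ this
      _ = 3*((c-1)*(c-m)^u) := by ring
  omega

theorem prime_z {P Q c z A B : ℕ} (hP : P.Prime) (hQ : Q.Prime) (hPodd : Odd P) (hQodd : Odd Q)
    (hPQ : P ≠ Q) (hcP : P < c) (hcQ : Q < c) (hPc : ¬ P ∣ c) (hQc : ¬ Q ∣ c) (hz : 2 ≤ z)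
    (hα : ∃ α, c - 1 = P ^ α) (heq : c ^ z - 1 = P ^ A * Q ^ B) : z.Prime := by
  have hP3 : 3 ≤ P := by
    have := hP.two_le
    rcases hPodd with ⟨m, hm⟩; omega
  have hc4 : 4 ≤ c := by omega
  by_contra hnp
  obtain ⟨α, hαe⟩ := hα
  have hα1 : 1 ≤ α := by
    rcases Nat.eq_zero_or_pos α with h0 | h1
    · rw [h0, pow_zero] at hαe; omega
    · exact h1
  have hPd1 : P ∣ c - 1 := by
    rw [hαe]; exact dvd_pow_self P (by omega)
  have hℓp : (z.minFac).Prime := Nat.minFac_prime (by omega)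
  have hℓz : z.minFac ∣ z := Nat.minFac_dvd z
  set ℓ := z.minFac with hℓdef
  have hℓne : ℓ ≠ z := by intro h; exact hnp (h ▸ hℓp)
  obtain ⟨M, hMz⟩ := hℓz
  have hℓ2 : 2 ≤ ℓ := hℓp.two_le
  have hM2 : 2 ≤ M := by
    rcases M with _ | _ | M
    · omega
    · exfalso; apply hℓne; omega
    · omega
  have hℓltz : ℓ < z := by
    have : ℓ * 2 ≤ ℓ * M := Nat.mul_le_mul_left ℓ hM2
    omega
  have hdvd : c ^ ℓ - 1 ∣ c ^ z - 1 := by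
    have h := Nat.sub_dvd_pow_sub_pow (c^ℓ) 1 M
    rwa [one_pow, ← pow_mul, ← hMz] at h
  obtain ⟨a, b, hia, hjb, hab⟩ := smooth hP hQ (heq ▸ hdvd)
  have hclc : c ≤ c ^ ℓ := Nat.le_self_pow (by omega) c
  have hcl2 : 2 ≤ c ^ ℓ := by omega
  have hclpos : 0 < c^ℓ - 1 := by omega
  have L4 : (c^ℓ - 1).factorization P = (c-1).factorization P + ℓ.factorization P :=
    lte_fact hP hPodd (by omega) hPd1 hPc (by omega)
  have fa : (c^ℓ - 1).factorization P = a := by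
    rw [hab]; exact fac_pp hP hQ hPQ a b
  have fα : (c-1).factorization P = α := by
    rw [hαe]
    have := fac_pp hP hQ hPQ α 0
    rwa [pow_zero, mul_one] at this
  have hνℓ1 : ℓ.factorization P ≤ 1 := by
    rw [hℓp.factorization]
    rw [Finsupp.single_apply]
    split <;> omega
  rcases Nat.eq_zero_or_pos b with hb0 | hb1
  · -- pure P branch : c^ℓ - 1 = P^a
    have hab' : c^ℓ - 1 = P ^ a := by rw [hab, hb0, pow_zero, mul_one]
    have key : c^ℓ - 1 = (c-1) * P^(ℓ.factorization P) := by
      rw [hab', hαe, ← pow_add]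
      congr 1
      omega
    have hge : (c-1) * c^(ℓ-1) ≤ c^ℓ - 1 := sub_one_mul_pow_le (by omega) (by omega)
    rw [key] at hge
    have hcan : c^(ℓ-1) ≤ P^(ℓ.factorization P) :=
      Nat.le_of_mul_le_mul_left hge (by omega)
    have hPν : P^(ℓ.factorization P) ≤ P := by
      calc P^(ℓ.factorization P) ≤ P^1 := Nat.pow_le_pow_right (by omega) hνℓ1
        _ = P := pow_one P
    have hcc : c ≤ c^(ℓ-1) := Nat.le_self_pow (by omega) c
    omega
  · -- Q divides c^ℓ - 1 branch
    have hQd : Q ∣ c^ℓ - 1 := by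
      rw [hab]
      exact Dvd.dvd.mul_left (dvd_pow_self Q (by omega)) _
    have hQcl : ¬ Q ∣ c^ℓ := fun h => hQc (hQ.dvd_of_dvd_pow h)
    have L2 : ((c^ℓ)^M - 1).factorization Q = (c^ℓ - 1).factorization Q + M.factorization Q :=
      lte_fact hQ hQodd hcl2 hQd hQcl (by omega)
    have hzM : (c^ℓ)^M = c^z := by rw [← pow_mul, ← hMz]
    rw [hzM] at L2
    have L3 : (c^z - 1).factorization P = (c-1).factorization P + z.factorization P :=
      lte_fact hP hPodd (by omega) hPd1 hPc (by omega)
    have fA : (c^z - 1).factorization P = A := by rw [heq]; exact fac_pp hP hQ hPQ A B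
    have fB : (c^z - 1).factorization Q = B := by
      rw [heq, mul_comm]; exact fac_pp hQ hP (Ne.symm hPQ) B A
    have fb : (c^ℓ - 1).factorization Q = b := by
      rw [hab, mul_comm]; exact fac_pp hQ hP (Ne.symm hPQ) b a
    have hνz : z.factorization P = ℓ.factorization P + M.factorization P := by
      rw [hMz, Nat.factorization_mul (by omega) (by omega)]
      simp
    have hA' : A = a + M.factorization P := by omega
    have hB' : B = b + M.factorization Q := by omega
    have key : c^z - 1 = (c^ℓ - 1) * (P^(M.factorization P) * Q^(M.factorization Q)) := by
      rw [heq, hab, hA', hB', pow_add, pow_add]; ring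
    have hD : P^(M.factorization P) * Q^(M.factorization Q) ∣ M :=
      Nat.Coprime.mul_dvd_of_dvd_of_dvd
        (Nat.Coprime.pow _ _ ((Nat.coprime_primes hP hQ).mpr hPQ))
        (Nat.ordProj_dvd M P) (Nat.ordProj_dvd M Q)
    have hDle : P^(M.factorization P) * Q^(M.factorization Q) ≤ M := Nat.le_of_dvd (by omega) hD
    have hge : (c^ℓ - 1) * c^(z-ℓ) ≤ c^z - 1 := by
      have h := sub_one_mul_pow_le (c := c^ℓ) (z := M) (by omega) (by omega)
      have e1 : (c^ℓ)^(M-1) = c^(z-ℓ) := by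
        rw [← pow_mul]
        congr 1
        have e2 : ℓ*(M-1) + ℓ = ℓ*M := by
          have : M - 1 + 1 = M := by omega
          calc ℓ*(M-1) + ℓ = ℓ*((M-1)+1) := by ring
            _ = ℓ*M := by rw [this]
        omega
      rw [e1, hzM] at h
      exact h
    rw [key] at hge
    have hcan : c^(z-ℓ) ≤ M := le_trans (Nat.le_of_mul_le_mul_left hge hclpos) hDle
    have hMle : M ≤ z := Nat.le_of_dvd (by omega) ⟨ℓ, by rw [hMz]; ring⟩
    have h2ℓ : 2*ℓ ≤ z := by
      have : ℓ * 2 ≤ ℓ * M := Nat.mul_le_mul_left ℓ hM2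
      omega
    have hu : 1 ≤ z - ℓ := by omega
    have h3a : 2*(z-ℓ) < 3^(z-ℓ) := two_mul_lt_three_pow _ hu
    have h3b : 3^(z-ℓ) ≤ c^(z-ℓ) := Nat.pow_le_pow_left (by omega) _
    omega
theorem core {p q r s t x z w y n : ℕ} (hp : p.Prime) (hq : q.Prime) (hpodd : Odd p)
    (hqodd : Odd q) (hpq : p ≠ q) (hr : 1 ≤ r) (hs : 1 ≤ s) (ht : 1 ≤ t) (hw : 1 ≤ w)
    (hz : 2 ≤ z) (hx : x = z + w) (hn : n = t * w) (hY : (s + t) * y = t * z)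
    (hE : (p^r)^x * q^n + 1 = (p^r + q^s)^z) : False := by
  have hp3 : 3 ≤ p := by
    have := hp.two_le; rcases hpodd with ⟨m, hm⟩; omega
  have hq3 : 3 ≤ q := by
    have := hq.two_le; rcases hqodd with ⟨m, hm⟩; omega
  have hpr : p ≤ p^r := Nat.le_self_pow (by omega) p
  have hqs : q ≤ q^s := Nat.le_self_pow (by omega) q
  set c := p^r + q^s with hcdef
  have hc8 : 8 ≤ c := by
    have hpq8 : 8 ≤ p + q := by
      rcases hpodd with ⟨m, hm⟩; rcases hqodd with ⟨m', hm'⟩; omega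
    omega
  have hcp : p < c := by omega
  have hcq : q < c := by omega
  have hpc : ¬ p ∣ c := by
    intro h
    have h2 : p ∣ p^r := dvd_pow_self p (by omega)
    have h3 : p ∣ q^s := by
      have := Nat.dvd_sub h h2
      rwa [hcdef, Nat.add_sub_cancel_left] at this
    exact hpq ((Nat.prime_dvd_prime_iff_eq hp hq).mp (hp.dvd_of_dvd_pow h3))
  have hqc : ¬ q ∣ c := by
    intro h
    have h2 : q ∣ q^s := dvd_pow_self q (by omega)
    have h3 : q ∣ p^r := by
      have := Nat.dvd_sub h h2
      rwa [hcdef, Nat.add_sub_cancel] at this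
    exact hpq ((Nat.prime_dvd_prime_iff_eq hq hp).mp (hq.dvd_of_dvd_pow h3)).symm
  have hx3 : z + 1 ≤ x := by omega
  have hn1 : 1 ≤ n := by
    have := Nat.mul_le_mul ht hw; omega
  have hrw1 : 1 ≤ r*w := by have := Nat.mul_le_mul hr hw; omega
  have hrxz : r*x = r*z + r*w := by rw [hx]; ring
  have hE1 : c^z - 1 = (p^r)^x * q^n := by omega
  have hE2 : c^z - 1 = p^(r*x) * q^n := by
    have e : (p^r)^x = p^(r*x) := (pow_mul p r x).symm
    rw [← e]; omega
  have hczpos : 1 ≤ c^z := Nat.one_le_pow _ _ (by omega)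
  have hdvd1 : c - 1 ∣ c^z - 1 := by
    have h := Nat.sub_dvd_pow_sub_pow c 1 z
    rwa [one_pow] at h
  obtain ⟨i, j, hi, hj, hij⟩ := smooth hp hq (hE2 ▸ hdvd1)
  have ha3 : 3 ≤ p^r := by omega
  have hb3 : 3 ≤ q^s := by omega
  have hcma : c - p^r = q^s := by omega
  have hqs1 : q^(s*(z-1)) = (c-p^r)^(z-1) := by rw [pow_mul, hcma]
  have hlt1 : (c - p^r)^(z-1) < c^(z-1) :=
    Nat.pow_lt_pow_left (by omega) (by omega)
  -- gcd decomposition of s, t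
  have hgpos : 0 < Nat.gcd s t := Nat.gcd_pos_of_pos_left t (by omega)
  set g := Nat.gcd s t with hgdef
  obtain ⟨s₁, hs1⟩ : g ∣ s := Nat.gcd_dvd_left s t
  obtain ⟨t₁, ht1⟩ : g ∣ t := Nat.gcd_dvd_right s t
  have hs₁pos : 1 ≤ s₁ := by
    rcases Nat.eq_zero_or_pos s₁ with h0 | h1
    · rw [h0, Nat.mul_zero] at hs1; omega
    · exact h1
  have ht₁pos : 1 ≤ t₁ := by
    rcases Nat.eq_zero_or_pos t₁ with h0 | h1
    · rw [h0, Nat.mul_zero] at ht1; omega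
    · exact h1
  rcases Nat.eq_zero_or_pos i with hi0 | hipos <;> rcases Nat.eq_zero_or_pos j with hj0 | hjpos
  · -- i = 0, j = 0 : c - 1 = 1, absurd
    rw [hi0, hj0, pow_zero, pow_zero] at hij; omega
  · -- i = 0, j ≥ 1 : CASE C, c - 1 = q^j
    have hijC : c - 1 = q^j := by rw [hij, hi0, pow_zero, one_mul]
    have hzp : z.Prime := by
      refine prime_z (A := n) (B := r*x) hq hp hqodd hpodd (Ne.symm hpq) hcq hcp hqc hpc hz
        ⟨j, hijC⟩ ?_
      rw [hE2]; ring
    -- z ≤ s + t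
    have hcop : Nat.Coprime s₁ t₁ := by
      have h1 : s / Nat.gcd s t = s₁ := by
        rw [← hgdef, hs1]; exact Nat.mul_div_cancel_left s₁ hgpos
      have h2 : t / Nat.gcd s t = t₁ := by
        rw [← hgdef, ht1]; exact Nat.mul_div_cancel_left t₁ hgpos
      have h3 := Nat.coprime_div_gcd_div_gcd (m := s) (n := t) (hgdef ▸ hgpos)
      rwa [h1, h2] at h3
    have hY' : (s₁+t₁)*y = t₁*z := by
      apply Nat.eq_of_mul_eq_mul_left hgpos
      calc g*((s₁+t₁)*y) = (g*s₁ + g*t₁)*y := by ring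
        _ = (s+t)*y := by rw [← hs1, ← ht1]
        _ = t*z := hY
        _ = g*(t₁*z) := by rw [ht1]; ring
    have hcop2 : Nat.Coprime (s₁+t₁) t₁ := by simpa using hcop
    have hdz : (s₁+t₁) ∣ z := by
      have hdvd : (s₁+t₁) ∣ t₁ * z := ⟨y, hY'.symm⟩
      exact (Nat.Coprime.dvd_of_dvd_mul_left hcop2 hdvd)
    have hsum : s₁ + t₁ = z := by
      rcases hzp.eq_one_or_self_of_dvd _ hdz with h1 | h1
      · omega
      · exact h1
    have hst : z ≤ s + t := by
      have e1 : s₁ ≤ g * s₁ := Nat.le_mul_of_pos_left s₁ hgpos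
      have e2 : t₁ ≤ g * t₁ := Nat.le_mul_of_pos_left t₁ hgpos
      omega
    have htn : t ≤ n := by rw [hn]; exact Nat.le_mul_of_pos_right t (by omega)
    have hsj : s < j := by
      have h1 : q^s < q^j := by omega
      exact (Nat.pow_lt_pow_iff_right hq.one_lt).mp h1
    have hXe : q^j = q^(j-1) * q := by
      rw [← pow_succ]; congr 1; omega
    have hble : q^s ≤ q^(j-1) := Nat.pow_le_pow_right (by omega) (by omega)
    have h3X : 3*q^(j-1) ≤ q^j := by
      rw [hXe]
      calc 3*q^(j-1) = q^(j-1)*3 := by ring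
        _ ≤ q^(j-1)*q := Nat.mul_le_mul_left _ hq3
    have hprb : 2*q^(j-1) < p^r := by omega
    have h1 : (2*q^(j-1))^x < (p^r)^x := Nat.pow_lt_pow_left hprb (by omega)
    have h1' : (2*q^(j-1))^x * q^n < (p^r)^x * q^n := by
      have hqn : 0 < q^n := pow_pos (by omega) n
      exact Nat.mul_lt_mul_of_lt_of_le h1 le_rfl hqn
    have h2 : c^z ≤ (2*q^j)^z := Nat.pow_le_pow_left (by omega) z
    have e1 : (2*q^(j-1))^x * q^n = 2^x * q^((j-1)*x + n) := by
      rw [mul_pow, ← pow_mul, pow_add]; ring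
    have e2 : (2*q^j)^z = 2^z * q^(j*z) := by rw [mul_pow, ← pow_mul]
    have big : 2^x * q^((j-1)*x + n) < 2^z * q^(j*z) := by
      rw [← e1, ← e2]
      calc (2*q^(j-1))^x * q^n < (p^r)^x * q^n := h1'
        _ = c^z - 1 := hE1.symm
        _ < c^z := by omega
        _ ≤ (2*q^j)^z := h2
    have hzx : 2^z ≤ 2^x := Nat.pow_le_pow_right (by omega) (by omega)
    have hqlt : q^((j-1)*x + n) < q^(j*z) := by
      have hh : 2^z * q^((j-1)*x + n) < 2^z * q^(j*z) := by
        calc 2^z * q^((j-1)*x + n) ≤ 2^x * q^((j-1)*x + n) :=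
              Nat.mul_le_mul_right _ hzx
          _ < 2^z * q^(j*z) := big
      exact Nat.lt_of_mul_lt_mul_left hh
    have hexp : (j-1)*x + n < j*z := (Nat.pow_lt_pow_iff_right hq.one_lt).mp hqlt
    have k1 : j*z = (j-1)*z + z := by
      have hjj : j = (j-1)+1 := by omega
      calc j*z = ((j-1)+1)*z := by rw [← hjj]
        _ = (j-1)*z + z := by ring
    have k2 : z ≤ (j-1) + n := by omega
    have k3 : (j-1)*x < (j-1)*z + (j-1) := by omega
    have k4 : (j-1)*x < (j-1)*(z+1) := by
      have : (j-1)*(z+1) = (j-1)*z + (j-1) := by ring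
      omega
    have k5 : x < z + 1 := Nat.lt_of_mul_lt_mul_left k4
    omega
  · -- i ≥ 1, j = 0 : CASE B, c - 1 = p^i
    have hijB : c - 1 = p^i := by rw [hij, hj0, pow_zero, mul_one]
    have hzp : z.Prime := prime_z hp hq hpodd hqodd hpq hcp hcq hpc hqc hz ⟨i, hijB⟩ hE2
    have hpd1 : p ∣ c - 1 := by rw [hijB]; exact dvd_pow_self p (by omega)
    have LPz : (c^z - 1).factorization p = (c-1).factorization p + z.factorization p :=
      lte_fact hp hpodd (by omega) hpd1 hpc (by omega)
    have fA : (c^z - 1).factorization p = r*x := by rw [hE2]; exact fac_pp hp hq hpq _ _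
    have fi : (c-1).factorization p = i := by
      rw [hijB]
      have := fac_pp hp hq hpq i 0
      rwa [pow_zero, mul_one] at this
    have hrx_i : r*x = i + z.factorization p := by omega
    have hge0 : (c-1) * c^(z-1) ≤ c^z - 1 := sub_one_mul_pow_le (by omega) (by omega)
    by_cases hzep : z = p
    · -- B2
      have hν1 : z.factorization p = 1 := by rw [hzep]; exact Nat.Prime.factorization_self hp
      have hrx1 : r*x = i + 1 := by omega
      have hS2 : c^z - 1 = (c-1) * (p * q^n) := by
        calc c^z - 1 = p^(r*x)*q^n := hE2
          _ = p^(i+1)*q^n := by rw [hrx1]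
          _ = (p^i)*(p*q^n) := by rw [pow_succ]; ring
          _ = (c-1)*(p*q^n) := by rw [hijB]
      have hqd : q ∣ c^z - 1 := by
        rw [hE2]; exact Dvd.dvd.mul_left (dvd_pow_self q (by omega)) _
      have hqc1 : ¬ q ∣ c - 1 := by
        rw [hijB]; intro h
        exact hpq ((Nat.prime_dvd_prime_iff_eq hq hp).mp (hq.dvd_of_dvd_pow h)).symm
      have hzq : z ∣ q - 1 := zdvd_qsub1 hq hqc hzp hqd hqc1 (by omega)
      have hpltq : p < q := by
        have := Nat.le_of_dvd (by omega) hzq; omega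
      have hI1 : n < s*(z-1) := by
        by_contra hcon
        push_neg at hcon
        have h2m : 2*((z-1)*(p^r)) ≤ c := by
          have e1 : 2*(z-1) < 3^(z-1) := two_mul_lt_three_pow (z-1) (by omega)
          have e2 : 3^(z-1) ≤ (p^r)^(z-1) := Nat.pow_le_pow_left ha3 _
          have e3 : (2*(z-1))*(p^r) ≤ (p^r)^(z-1)*(p^r) :=
            Nat.mul_le_mul (by omega) le_rfl
          have e4 : (p^r)^(z-1)*(p^r) = (p^r)^z := by
            rw [← pow_succ]; congr 1; omega
          have e6 : r*z ≤ i := by omega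
          have e7 : p^(r*z) ≤ p^i := Nat.pow_le_pow_right (by omega) e6
          calc 2*((z-1)*(p^r)) = (2*(z-1))*(p^r) := by ring
            _ ≤ (p^r)^(z-1)*(p^r) := e3
            _ = (p^r)^z := e4
            _ = p^(r*z) := by rw [pow_mul]
            _ ≤ p^i := e7
            _ = c - 1 := hijB.symm
            _ ≤ c := by omega
        have hSB : c^z ≤ 3*((c-1)*(c-p^r)^(z-1)) := SB (by omega) (by omega) (by omega) h2m
        have hchain : c^z ≤ c^z - 1 := by
          calc c^z ≤ 3*((c-1)*(c-p^r)^(z-1)) := hSB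
            _ ≤ p*((c-1)*(c-p^r)^(z-1)) := Nat.mul_le_mul_right _ hp3
            _ = (c-1)*(p*(c-p^r)^(z-1)) := by ring
            _ = (c-1)*(p*q^(s*(z-1))) := by rw [hqs1]
            _ ≤ (c-1)*(p*q^n) := by
                refine Nat.mul_le_mul_left _ (Nat.mul_le_mul_left p ?_)
                exact Nat.pow_le_pow_right (by omega) hcon
            _ = c^z - 1 := hS2.symm
        omega
      have hI2 : s*(z-1) < n + g := by
        have c1 : c^(z-1) ≤ p*q^n := by
          rw [hS2] at hge0
          exact Nat.le_of_mul_le_mul_left hge0 (by omega)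
        have hfin : p*q^(s*(z-1)) < p*q^(n+g) := by
          calc p*q^(s*(z-1)) = p*(c-p^r)^(z-1) := by rw [hqs1]
            _ < p*c^(z-1) := by
                exact Nat.mul_lt_mul_of_le_of_lt le_rfl hlt1 (by omega)
            _ < q*c^(z-1) := by
                exact Nat.mul_lt_mul_of_lt_of_le hpltq le_rfl (pow_pos (by omega) _)
            _ ≤ q*(p*q^n) := Nat.mul_le_mul_left q c1
            _ = p*q^(n+1) := by rw [pow_succ]; ring
            _ ≤ p*q^(n+g) := by
                refine Nat.mul_le_mul_left p (Nat.pow_le_pow_right (by omega) (by omega))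
        have := Nat.lt_of_mul_lt_mul_left hfin
        exact (Nat.pow_lt_pow_iff_right hq.one_lt).mp this
      have e1 : n = g*(t₁*w) := by rw [hn, ht1]; ring
      have e2 : s*(z-1) = g*(s₁*(z-1)) := by rw [hs1]; ring
      have k1 : t₁*w < s₁*(z-1) := by
        refine Nat.lt_of_mul_lt_mul_left (a := g) ?_
        rw [← e1, ← e2]; exact hI1
      have k2 : s₁*(z-1) < t₁*w + 1 := by
        refine Nat.lt_of_mul_lt_mul_left (a := g) ?_
        calc g*(s₁*(z-1)) = s*(z-1) := e2.symm
          _ < n + g := hI2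
          _ = g*(t₁*w) + g := by rw [e1]
          _ = g*(t₁*w + 1) := by ring
      omega
    · -- B1
      have hν0 : z.factorization p = 0 := by
        apply Nat.factorization_eq_zero_of_not_dvd
        intro h
        exact hzep ((Nat.prime_dvd_prime_iff_eq hp hzp).mp h).symm
      have hieq : i = r*x := by omega
      have hca : c - 1 = (p^r)^x := by rw [hijB, hieq, pow_mul]
      have hS1 : c^z - 1 = (c-1) * q^n := by rw [hE1, hca]
      have hcz1 : c^(z-1) ≤ q^n := by
        rw [hS1] at hge0
        exact Nat.le_of_mul_le_mul_left hge0 (by omega)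
      have hns : s*(z-1) + 1 ≤ n := by
        have h1 : q^(s*(z-1)) < q^n := by
          calc q^(s*(z-1)) = (c-p^r)^(z-1) := hqs1
            _ < c^(z-1) := hlt1
            _ ≤ q^n := hcz1
        have := (Nat.pow_lt_pow_iff_right hq.one_lt).mp h1
        omega
      have h2m : 2*((z-1)*(p^r)) ≤ c := by
        have e1 : 2*z < 3^z := two_mul_lt_three_pow z (by omega)
        have e2 : 3^z ≤ (p^r)^z := Nat.pow_le_pow_left ha3 z
        have e3 : (2*(z-1))*(p^r) ≤ (p^r)^z*(p^r) := Nat.mul_le_mul (by omega) le_rfl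
        have e5 : (p^r)^(z+1) ≤ (p^r)^x := Nat.pow_le_pow_right (by omega) (by omega)
        calc 2*((z-1)*(p^r)) = (2*(z-1))*(p^r) := by ring
          _ ≤ (p^r)^z*(p^r) := e3
          _ = (p^r)^(z+1) := (pow_succ _ z).symm
          _ ≤ (p^r)^x := e5
          _ = c - 1 := hca.symm
          _ ≤ c := by omega
      have hSB : c^z ≤ 3*((c-1)*(c-p^r)^(z-1)) := SB (by omega) (by omega) (by omega) h2m
      have hchain : c^z ≤ c^z - 1 := by
        calc c^z ≤ 3*((c-1)*(c-p^r)^(z-1)) := hSB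
          _ ≤ q*((c-1)*(c-p^r)^(z-1)) := Nat.mul_le_mul_right _ hq3
          _ = (c-1)*(q^(s*(z-1))*q) := by rw [hqs1]; ring
          _ = (c-1)*q^(s*(z-1)+1) := by rw [pow_succ]
          _ ≤ (c-1)*q^n := Nat.mul_le_mul_left _ (Nat.pow_le_pow_right (by omega) hns)
          _ = c^z - 1 := hS1.symm
      omega
  · -- i ≥ 1, j ≥ 1 : impossible
    have hpd1 : p ∣ c - 1 := by
      rw [hij]; exact Dvd.dvd.mul_right (dvd_pow_self p (by omega)) _
    have hqd1 : q ∣ c - 1 := by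
      rw [hij]; exact Dvd.dvd.mul_left (dvd_pow_self q (by omega)) _
    have LPz : (c^z - 1).factorization p = (c-1).factorization p + z.factorization p :=
      lte_fact hp hpodd (by omega) hpd1 hpc (by omega)
    have LQz : (c^z - 1).factorization q = (c-1).factorization q + z.factorization q :=
      lte_fact hq hqodd (by omega) hqd1 hqc (by omega)
    have fA : (c^z - 1).factorization p = r*x := by rw [hE2]; exact fac_pp hp hq hpq _ _
    have fB : (c^z - 1).factorization q = n := by
      rw [hE2, mul_comm]; exact fac_pp hq hp (Ne.symm hpq) _ _
    have fi : (c-1).factorization p = i := by rw [hij]; exact fac_pp hp hq hpq _ _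
    have fj : (c-1).factorization q = j := by
      rw [hij, mul_comm]; exact fac_pp hq hp (Ne.symm hpq) _ _
    have hA' : r*x = i + z.factorization p := by omega
    have hB' : n = j + z.factorization q := by omega
    have key : c^z - 1 = (c-1) * (p^(z.factorization p) * q^(z.factorization q)) := by
      calc c^z - 1 = p^(r*x) * q^n := hE2
        _ = p^(i + z.factorization p) * q^(j + z.factorization q) := by rw [← hA', ← hB']
        _ = (p^i*q^j) * (p^(z.factorization p) * q^(z.factorization q)) := by
            rw [pow_add, pow_add]; ring
        _ = (c-1) * (p^(z.factorization p) * q^(z.factorization q)) := by rw [hij]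
    have hD : p^(z.factorization p) * q^(z.factorization q) ∣ z :=
      Nat.Coprime.mul_dvd_of_dvd_of_dvd
        (Nat.Coprime.pow _ _ ((Nat.coprime_primes hp hq).mpr hpq))
        (Nat.ordProj_dvd z p) (Nat.ordProj_dvd z q)
    have hDle : p^(z.factorization p) * q^(z.factorization q) ≤ z := Nat.le_of_dvd (by omega) hD
    have hge0 : (c-1) * c^(z-1) ≤ c^z - 1 := sub_one_mul_pow_le (by omega) (by omega)
    have hcan : c^(z-1) ≤ p^(z.factorization p) * q^(z.factorization q) := by
      rw [key] at hge0
      exact Nat.le_of_mul_le_mul_left hge0 (by omega)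
    have h3a : 2*(z-1) < 3^(z-1) := two_mul_lt_three_pow (z-1) (by omega)
    have h3b : 3^(z-1) ≤ c^(z-1) := Nat.pow_le_pow_left (by omega) _
    omega

end Stmt19Aux

theorem stmt_19 (k p q r s : ℕ) (hk : 1 < k) (hp : p.Prime) (hpodd : Odd p)
    (hq : q.Prime) (hqodd : Odd q) (hpq : p ≠ q)
    (hr : 0 < r) (hs : 0 < s) :
    ¬ ∃ x y z : ℕ, 0 < x ∧ 0 < y ∧ 0 < z ∧ x > z ∧ z > y ∧
      (p ^ r * k) ^ x + (q ^ s * k) ^ y = ((p ^ r + q ^ s) * k) ^ z := by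
  rintro ⟨x, y, z, hx0, hy0, hz0, hxz, hzy, heq⟩
  have hkpos : 0 < k := by omega
  -- Step 1: k ∣ q^(s*y)
  have hkx : k^(y+1) ∣ (p^r*k)^x := by
    have h1 : k^(y+1) ∣ k^x := pow_dvd_pow k (by omega)
    refine h1.trans ?_
    rw [mul_pow]
    exact dvd_mul_left _ _
  have hkz : k^(y+1) ∣ ((p^r+q^s)*k)^z := by
    have h1 : k^(y+1) ∣ k^z := pow_dvd_pow k (by omega)
    refine h1.trans ?_
    rw [mul_pow]
    exact dvd_mul_left _ _
  have hky : k^(y+1) ∣ (q^s*k)^y := by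
    have hsub : (q^s*k)^y = ((p^r+q^s)*k)^z - (p^r*k)^x := by omega
    rw [hsub]
    exact Nat.dvd_sub hkz hkx
  have hk1 : k ∣ q^(s*y) := by
    have e1 : (q^s*k)^y = k^y * q^(s*y) := by rw [mul_pow, ← pow_mul]; ring
    rw [e1, pow_succ] at hky
    exact (Nat.mul_dvd_mul_iff_left (pow_pos hkpos y)).mp hky
  obtain ⟨t, htle, rfl⟩ := (Nat.dvd_prime_pow hq).mp hk1
  have ht1 : 1 ≤ t := by
    rcases Nat.eq_zero_or_pos t with h0 | h1
    · rw [h0, pow_zero] at hk; omega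
    · exact h1
  have hq3 : 2 ≤ q := hq.two_le
  have hqc : ¬ q ∣ (p^r + q^s) := by
    intro h
    have h2 : q ∣ q^s := dvd_pow_self q (by omega)
    have h3 : q ∣ p^r := by
      have := Nat.dvd_sub h h2
      rwa [Nat.add_sub_cancel] at this
    exact hpq ((Nat.prime_dvd_prime_iff_eq hq hp).mp (hq.dvd_of_dvd_pow h3)).symm
  -- rewrite the equation
  have heq2 : (p^r)^x * q^(t*x) + q^(s*y + t*y) = (p^r+q^s)^z * q^(t*z) := by
    have e1 : (p^r * q^t)^x = (p^r)^x * q^(t*x) := by rw [mul_pow, ← pow_mul q t x]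
    have e2 : (q^s * q^t)^y = q^(s*y + t*y) := by
      rw [mul_pow, ← pow_mul, ← pow_mul, ← pow_add]
    have e3 : ((p^r+q^s) * q^t)^z = (p^r+q^s)^z * q^(t*z) := by rw [mul_pow, ← pow_mul]
    rw [← e1, ← e2, ← e3]
    exact heq
  have htzx : t*z < t*x := Nat.mul_lt_mul_of_le_of_lt le_rfl hxz (by omega)
  have hA : s*y + t*y = t*z := by
    rcases lt_trichotomy (s*y + t*y) (t*z) with hlt | he | hgt
    · exfalso
      have d1 : q^(s*y+t*y+1) ∣ (p^r)^x * q^(t*x) :=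
        Dvd.dvd.mul_left (pow_dvd_pow q (by omega)) _
      have d2 : q^(s*y+t*y+1) ∣ (p^r+q^s)^z * q^(t*z) :=
        Dvd.dvd.mul_left (pow_dvd_pow q (by omega)) _
      have d3 : q^(s*y+t*y+1) ∣ q^(s*y+t*y) := by
        have e : q^(s*y+t*y) = (p^r+q^s)^z * q^(t*z) - (p^r)^x * q^(t*x) := by omega
        rw [e]
        exact Nat.dvd_sub d2 d1
      have := (Nat.pow_dvd_pow_iff_le_right hq.one_lt).mp d3
      omega
    · exact he
    · exfalso
      have d1 : q^(t*z+1) ∣ (p^r)^x * q^(t*x) :=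
        Dvd.dvd.mul_left (pow_dvd_pow q (by omega)) _
      have d2 : q^(t*z+1) ∣ q^(s*y+t*y) := pow_dvd_pow q (by omega)
      have d3 : q^(t*z+1) ∣ (p^r+q^s)^z * q^(t*z) := by
        rw [← heq2]
        exact dvd_add d1 d2
      rw [pow_succ, mul_comm ((p^r+q^s)^z) (q^(t*z))] at d3
      have h4 : q ∣ (p^r+q^s)^z :=
        (Nat.mul_dvd_mul_iff_left (pow_pos (by omega : 0 < q) (t*z))).mp d3
      exact hqc (hq.dvd_of_dvd_pow h4)
  have hE : (p^r)^x * q^(t*(x-z)) + 1 = (p^r+q^s)^z := by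
    apply Nat.eq_of_mul_eq_mul_left (pow_pos (by omega : 0 < q) (t*z))
    have e4 : q^(t*x) = q^(t*z) * q^(t*(x-z)) := by
      rw [← pow_add]
      congr 1
      have h5 : t*(z + (x-z)) = t*z + t*(x-z) := by ring
      have h6 : z + (x - z) = x := by omega
      rw [h6] at h5
      omega
    calc q^(t*z) * ((p^r)^x * q^(t*(x-z)) + 1)
        = (p^r)^x * (q^(t*z) * q^(t*(x-z))) + q^(t*z) := by ring
      _ = (p^r)^x * q^(t*x) + q^(s*y+t*y) := by rw [← e4, hA]
      _ = (p^r+q^s)^z * q^(t*z) := heq2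
      _ = q^(t*z) * (p^r+q^s)^z := by ring
  exact Stmt19Aux.core hp hq hpodd hqodd hpq hr hs ht1 (by omega : 1 ≤ x - z)
    (by omega : 2 ≤ z) (by omega : x = z + (x-z)) rfl
    (by rw [add_mul]; exact hA) hE
end
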